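/- arXiv:1106.4232 — 7 statements merged into one kernel-verified Lean document; each statement's English description precedes it below -/
import Mathlib

section
/- Let a ∈ C¹([-1,1]) be positive on (-1,1), vanish at ±1, and suppose A(x) = ∫₀ˣ ds/a(s) ∈ L¹(-1,1). Then for every u in the weighted Sobolev space H¹_a(-1,1) (i.e., u ∈ L²(-1,1), u locally absolutely continuous on (-1,1), √a·u' ∈ L²(-1,1)) one has the pointwise bound |u(0)| ≤ C‖u‖_{H¹_a}, where C depends only on a, and ‖u‖²_{H¹_a} = ‖u‖²_{L²} + ‖√a u'‖²_{L²}. -/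
/-!
Fix `x ∈ (0,1)`. By the fundamental theorem of calculus and Cauchy–Schwarz applied to
`u' = (√a u') · a^{-1/2}` on `[0,x]`,
`|u 0| ≤ |u x| + ‖√a u'‖₂ √(A x)`.
Averaging over `x ∈ (0,1)` and using `‖u‖_{L¹(0,1)} ≤ ‖u‖_{L²(0,1)}` gives
`|u 0| ≤ (1 + ∫₀¹ √A) ‖u‖_{H¹_a}`.
-/

open MeasureTheory Set Real

theorem integral_mul_le_sqrt_mul_sqrt {α : Type*} [MeasurableSpace α] {μ : Measure α}
    {f g : α → ℝ} (hf₀ : 0 ≤ᵐ[μ] f) (hg₀ : 0 ≤ᵐ[μ] g) (hf : MemLp f 2 μ) (hg : MemLp g 2 μ) :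
    ∫ x, f x * g x ∂μ ≤ √(∫ x, f x ^ 2 ∂μ) * √(∫ x, g x ^ 2 ∂μ) := by
  have h := integral_mul_le_Lp_mul_Lq_of_nonneg Real.HolderConjugate.two_two hf₀ hg₀
    (by rwa [ENNReal.ofReal_ofNat]) (by rwa [ENNReal.ofReal_ofNat])
  simpa only [Real.rpow_two, ← Real.sqrt_eq_rpow] using h

theorem MeasureTheory.Integrable.sqrt {α : Type*} [MeasurableSpace α] {μ : Measure α}
    [IsFiniteMeasure μ] {f : α → ℝ} (hf : Integrable f μ) : Integrable (fun x => √(f x)) μ := by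
  refine (hf.norm.add (integrable_const 1)).mono'
    (continuous_sqrt.comp_aestronglyMeasurable hf.aestronglyMeasurable) ?_
  filter_upwards with x
  rw [Real.norm_of_nonneg (Real.sqrt_nonneg _)]
  show √(f x) ≤ |f x| + 1
  exact Real.sqrt_le_iff.2 ⟨by positivity, by nlinarith [le_abs_self (f x), abs_nonneg (f x)]⟩

theorem abs_sub_le_sqrt_integral_mul_sq_mul_sqrt_integral_inv {a u u' : ℝ → ℝ} {b x : ℝ}
    (hbx : b ≤ x) (ha : ∀ s ∈ Ioc b x, 0 < a s)
    (ha_inv : IntervalIntegrable (fun s => 1 / a s) volume b x)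
    (hu : ∀ s ∈ Icc b x, HasDerivAt u (u' s) s)
    (hv : MemLp (fun s => √(a s) * u' s) 2 (volume.restrict (Ioc b x))) :
    |u x - u b| ≤ √(∫ s in Ioc b x, a s * u' s ^ 2) * √(∫ s in b..x, 1 / a s) := by
  rw [intervalIntegrable_iff_integrableOn_Ioc_of_le hbx] at ha_inv
  set g : ℝ → ℝ := fun s => √(1 / a s)
  have hg : MemLp g 2 (volume.restrict (Ioc b x)) := by
    refine (memLp_two_iff_integrable_sq
      (continuous_sqrt.comp_aestronglyMeasurable ha_inv.aestronglyMeasurable)).2 ?_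
    refine ha_inv.congr_fun (fun s hs => ?_) measurableSet_Ioc
    exact (Real.sq_sqrt (one_div_pos.2 (ha s hs)).le).symm
  have hsplit : ∀ s ∈ Ioc b x, √(a s) * u' s * g s = u' s := fun s hs => by
    have has := ha s hs
    rw [mul_right_comm, ← Real.sqrt_mul has.le, mul_one_div_cancel has.ne', Real.sqrt_one,
      one_mul]
  have hu'_int : IntegrableOn u' (Ioc b x) :=
    (show IntegrableOn (fun s => √(a s) * u' s * g s) (Ioc b x) volume from
      hv.integrable_mul hg).congr_fun (fun s hs => hsplit s hs) measurableSet_Ioc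
  have hftc : ∫ s in b..x, u' s = u x - u b :=
    intervalIntegral.integral_eq_sub_of_hasDerivAt (fun s hs => hu s (uIcc_of_le hbx ▸ hs))
      ((intervalIntegrable_iff_integrableOn_Ioc_of_le hbx).2 hu'_int)
  calc |u x - u b| = |∫ s in b..x, u' s| := by rw [hftc]
    _ ≤ ∫ s in Ioc b x, |√(a s) * u' s| * g s := by
      rw [intervalIntegral.integral_of_le hbx]
      refine (abs_integral_le_integral_abs).trans_eq (setIntegral_congr_fun measurableSet_Ioc
        fun s hs => ?_)
      rw [← abs_of_nonneg (show 0 ≤ g s from Real.sqrt_nonneg _), ← abs_mul, hsplit s hs]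
    _ ≤ √(∫ s in Ioc b x, |√(a s) * u' s| ^ 2) * √(∫ s in Ioc b x, g s ^ 2) :=
      integral_mul_le_sqrt_mul_sqrt (.of_forall fun _ => abs_nonneg _)
        (.of_forall fun _ => Real.sqrt_nonneg _) hv.abs hg
    _ = √(∫ s in Ioc b x, a s * u' s ^ 2) * √(∫ s in b..x, 1 / a s) := by
      rw [intervalIntegral.integral_of_le hbx]
      congr 2 <;> refine setIntegral_congr_fun measurableSet_Ioc fun s hs => ?_
      · rw [sq_abs, mul_pow, Real.sq_sqrt (ha s hs).le]
      · exact Real.sq_sqrt (one_div_pos.2 (ha s hs)).le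

theorem integral_abs_le_sqrt_integral_sq_mul_sqrt_measureReal {α : Type*} [MeasurableSpace α]
    {μ : Measure α} [IsFiniteMeasure μ] {f : α → ℝ} (hf : MemLp f 2 μ) :
    ∫ x, |f x| ∂μ ≤ √(∫ x, f x ^ 2 ∂μ) * √(μ.real univ) := by
  simpa using integral_mul_le_sqrt_mul_sqrt (g := fun _ => 1)
    (.of_forall fun x => abs_nonneg (f x)) (.of_forall fun _ => zero_le_one) hf.abs (memLp_const 1)

theorem le_sqrt_setIntegral_sq_add_setIntegral_of_forall_le {c : ℝ} {f g : ℝ → ℝ}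
    (hf : MemLp f 2 (volume.restrict (Ioo 0 1))) (hg : IntegrableOn g (Ioo 0 1))
    (h : ∀ x ∈ Ioo (0:ℝ) 1, c ≤ |f x| + g x) :
    c ≤ √(∫ x in Ioo (0:ℝ) 1, f x ^ 2) + ∫ x in Ioo (0:ℝ) 1, g x := by
  have hf_int : IntegrableOn (fun x => |f x|) (Ioo 0 1) := (hf.integrable one_le_two).abs
  have hL1 := integral_abs_le_sqrt_integral_sq_mul_sqrt_measureReal hf
  rw [measureReal_restrict_apply_univ, volume_real_Ioo_of_le zero_le_one, sub_zero,
    Real.sqrt_one, mul_one] at hL1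
  have hmean := setIntegral_ge_of_const_le_real measurableSet_Ioo (by simp) h (hf_int.add hg)
  rw [integral_add hf_int hg, volume_real_Ioo_of_le zero_le_one, sub_zero, mul_one] at hmean
  linarith

theorem abs_le_abs_add_sqrt_mul_sqrt_integral_inv {a u u' : ℝ → ℝ}
    (ha : ContinuousOn a (Icc (-1) 1)) (hapos : ∀ x ∈ Ioo (-1:ℝ) 1, 0 < a x)
    (hu : ∀ x ∈ Ioo (-1:ℝ) 1, HasDerivAt u (u' x) x)
    (hv : MemLp (fun x => √(a x) * u' x) 2 (volume.restrict (Ioo (-1) 1)))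
    {x : ℝ} (hx : x ∈ Ico (0:ℝ) 1) :
    |u 0| ≤ |u x| + √(∫ s in Ioo (-1:ℝ) 1, a s * u' s ^ 2) * √(∫ s in (0:ℝ)..x, 1 / a s) := by
  have hIcc : Icc 0 x ⊆ Ioo (-1) 1 := fun s hs => ⟨by linarith [hs.1], hs.2.trans_lt hx.2⟩
  have hIoc : Ioc 0 x ⊆ Ioo (-1) 1 := Ioc_subset_Icc_self.trans hIcc
  have hinv : ContinuousOn (fun s => 1 / a s) (Icc 0 x) :=
    continuousOn_const.div (ha.mono (hIcc.trans Ioo_subset_Icc_self))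
      fun s hs => (hapos s (hIcc hs)).ne'
  have hincr := abs_sub_le_sqrt_integral_mul_sq_mul_sqrt_integral_inv hx.1
    (fun s hs => hapos s (hIoc hs)) (hinv.intervalIntegrable_of_Icc hx.1)
    (fun s hs => hu s (hIcc hs)) (hv.mono_measure (Measure.restrict_mono hIoc le_rfl))
  have henergy : ∫ s in Ioc 0 x, a s * u' s ^ 2 ≤ ∫ s in Ioo (-1:ℝ) 1, a s * u' s ^ 2 :=
    setIntegral_mono_set
      (IntegrableOn.congr_fun hv.integrable_sq
        (fun s hs => by rw [mul_pow, Real.sq_sqrt (hapos s hs).le]) measurableSet_Ioo)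
      ((ae_restrict_mem measurableSet_Ioo).mono fun s hs =>
        mul_nonneg (hapos s hs).le (sq_nonneg _))
      hIoc.eventuallyLE
  calc |u 0| ≤ |u x| + |u x - u 0| := by
        linarith [abs_sub_abs_le_abs_sub (u 0) (u x), abs_sub_comm (u 0) (u x)]
    _ ≤ _ := by
        gcongr
        exact hincr.trans (by gcongr)

theorem pointwise_bound_at_zero_general
    (a : ℝ → ℝ) (ha : ContDiffOn ℝ 1 a (Icc (-1) 1))
    (hapos : ∀ x ∈ Ioo (-1:ℝ) 1, 0 < a x)
    (A : ℝ → ℝ) (hA : ∀ x, A x = ∫ s in (0:ℝ)..x, 1 / a s)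
    (hAint : IntegrableOn A (Ioo (-1) 1)) :
    ∃ C > 0, ∀ (u u' : ℝ → ℝ),
      (∀ x ∈ Ioo (-1:ℝ) 1, HasDerivAt u (u' x) x) →
      MemLp u 2 (volume.restrict (Ioo (-1) 1)) →
      MemLp (fun x => Real.sqrt (a x) * u' x) 2 (volume.restrict (Ioo (-1) 1)) →
      |u 0| ≤ C * Real.sqrt
        ((∫ x in Ioo (-1:ℝ) 1, u x ^ 2) + ∫ x in Ioo (-1:ℝ) 1, a x * u' x ^ 2) := by
  have hsub : Ioo (0:ℝ) 1 ⊆ Ioo (-1) 1 := Ioo_subset_Ioo_left (by norm_num)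
  set K := ∫ x in Ioo (0:ℝ) 1, √(A x)
  have hK : 0 ≤ K := setIntegral_nonneg measurableSet_Ioo fun _ _ => Real.sqrt_nonneg _
  refine ⟨1 + K, by positivity, fun u u' hu' hu hv => ?_⟩
  set S := ∫ x in Ioo (-1:ℝ) 1, u x ^ 2
  set T := ∫ x in Ioo (-1:ℝ) 1, a x * u' x ^ 2
  have hS₀ : 0 ≤ S := setIntegral_nonneg measurableSet_Ioo fun _ _ => sq_nonneg _
  have hT₀ : 0 ≤ T := setIntegral_nonneg measurableSet_Ioo fun x hx =>
    mul_nonneg (hapos x hx).le (sq_nonneg _)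
  have hu₀ := le_sqrt_setIntegral_sq_add_setIntegral_of_forall_le
    (hu.mono_measure (Measure.restrict_mono hsub le_rfl))
    ((hAint.mono_set hsub).sqrt.const_mul √T) fun x hx => hA x ▸
      abs_le_abs_add_sqrt_mul_sqrt_integral_inv ha.continuousOn hapos hu' hv
        (Ioo_subset_Ico_self hx)
  rw [integral_const_mul] at hu₀
  have hS : √(∫ x in Ioo (0:ℝ) 1, u x ^ 2) ≤ √(S + T) := Real.sqrt_le_sqrt <|
    (setIntegral_mono_set hu.integrable_sq (.of_forall fun _ => sq_nonneg _)
      hsub.eventuallyLE).trans (by linarith)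
  have hT : √T ≤ √(S + T) := Real.sqrt_le_sqrt (by linarith)
  nlinarith [Real.sqrt_nonneg T]

/-- Pointwise bound at 0 for functions in the weighted Sobolev space H¹_a(-1,1):
    |u(0)| ≤ C ‖u‖_{H¹_a}, with C depending only on a. -/
theorem pointwise_bound_at_zero
    (a : ℝ → ℝ) (ha : ContDiffOn ℝ 1 a (Icc (-1) 1))
    (hapos : ∀ x ∈ Ioo (-1:ℝ) 1, 0 < a x)
    (ha1 : a (-1) = 0) (ha2 : a 1 = 0)
    (A : ℝ → ℝ) (hA : ∀ x, A x = ∫ s in (0:ℝ)..x, 1 / a s)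
    (hAint : IntegrableOn A (Ioo (-1) 1)) :
    ∃ C > 0, ∀ (u u' : ℝ → ℝ),
      (∀ x ∈ Ioo (-1:ℝ) 1, HasDerivAt u (u' x) x) →
      MemLp u 2 (volume.restrict (Ioo (-1) 1)) →
      MemLp (fun x => Real.sqrt (a x) * u' x) 2 (volume.restrict (Ioo (-1) 1)) →
      |u 0| ≤ C * Real.sqrt
        ((∫ x in Ioo (-1:ℝ) 1, u x ^ 2) + ∫ x in Ioo (-1:ℝ) 1, a x * u' x ^ 2) :=
  pointwise_bound_at_zero_general a ha hapos A hA hAint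
end

section
/- Let a ∈ C¹([-1,1]) be positive on (-1,1), vanish at ±1, with A(x) = ∫₀ˣ ds/a(s) ∈ L¹(-1,1). Then for every R > 0, sup over u ∈ H¹_a(-1,1) with ‖u‖_{H¹_a} ≤ R of ∫_{1-h}^{1} |u(x)|² dx tends to 0 as h → 0⁺. (Uniform smallness of L² mass near the degenerate endpoint.) -/
/-! For `0 ≤ y ≤ x < 1`, the fundamental theorem of calculus and Cauchy–Schwarz with the weight `a`
give `(u x - u y)² ≤ (∫ a u'²) (∫_y^x 1/a) ≤ ‖u‖²_{H¹_a} A x`. By the first moment method some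
`y ∈ (0, 1/2)` has `u y² ≤ 2 ‖u‖²_{L²}`, so on `(1/2, 1)` every `u` in the ball of radius `R` is
dominated by `u² ≤ 4 R² + 2 R² A`. This majorant is integrable and independent of `u`, so its
integral over `(1 - h, 1)` is small for small `h`. -/

open MeasureTheory Set Real Filter Topology

theorem sq_integral_abs_mul_le {α : Type*} [MeasurableSpace α] {μ : Measure α} {f g : α → ℝ}
    (hf : MemLp f 2 μ) (hg : MemLp g 2 μ) :
    (∫ x, |f x * g x| ∂μ) ^ 2 ≤ (∫ x, f x ^ 2 ∂μ) * ∫ x, g x ^ 2 ∂μ := by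
  have holder := integral_mul_norm_le_Lp_mul_Lq Real.HolderConjugate.two_two
    (by simpa using hf) (by simpa using hg)
  simp only [Real.norm_eq_abs, ← abs_mul, rpow_two, sq_abs, ← sqrt_eq_rpow] at holder
  calc (∫ x, |f x * g x| ∂μ) ^ 2
      ≤ (√(∫ x, f x ^ 2 ∂μ) * √(∫ x, g x ^ 2 ∂μ)) ^ 2 := by gcongr
    _ = (∫ x, f x ^ 2 ∂μ) * ∫ x, g x ^ 2 ∂μ := by
      rw [mul_pow, sq_sqrt (by positivity), sq_sqrt (by positivity)]

theorem sq_sub_le_setIntegral_mul_integral_inv {a u u' : ℝ → ℝ} {y x : ℝ} (hyx : y ≤ x)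
    (ha : ContinuousOn a (Icc y x)) (hapos : ∀ s ∈ Icc y x, 0 < a s)
    (hu : ∀ s ∈ Icc y x, HasDerivAt u (u' s) s)
    (hau : MemLp (fun s => √(a s) * u' s) 2 (volume.restrict (Ioc y x))) :
    (u x - u y) ^ 2 ≤ (∫ s in Ioc y x, a s * u' s ^ 2) * ∫ s in y..x, 1 / a s := by
  have hpos : ∀ s ∈ Ioc y x, 0 < a s := fun s hs => hapos s (Ioc_subset_Icc_self hs)
  have hinv : IntegrableOn (fun s => 1 / a s) (Ioc y x) :=
    ((continuousOn_const.div ha fun s hs => (hapos s hs).ne').integrableOn_Icc).mono_set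
      Ioc_subset_Icc_self
  have hg : MemLp (fun s => 1 / √(a s)) 2 (volume.restrict (Ioc y x)) := by
    refine (memLp_two_iff_integrable_sq ?_).2 (hinv.congr_fun (fun s hs => ?_) measurableSet_Ioc)
    · exact ((continuousOn_const.div (ha.sqrt.mono Ioc_subset_Icc_self) fun s hs =>
        (sqrt_pos.2 (hpos s hs)).ne').aestronglyMeasurable measurableSet_Ioc)
    · rw [div_pow, one_pow, sq_sqrt (hpos s hs).le]
  have hprod : ∀ s ∈ Ioc y x, √(a s) * u' s * (1 / √(a s)) = u' s := fun s hs => by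
    field_simp [(sqrt_pos.2 (hpos s hs)).ne']
  have hu' : IntegrableOn u' (Ioc y x) :=
    (hau.integrable_mul hg).congr (ae_restrict_of_forall_mem measurableSet_Ioc hprod)
  have hftc : u x - u y = ∫ s in Ioc y x, u' s := by
    rw [← intervalIntegral.integral_of_le hyx, intervalIntegral.integral_eq_sub_of_hasDerivAt]
    · exact fun s hs => hu s (by rwa [uIcc_of_le hyx] at hs)
    · exact (intervalIntegrable_iff_integrableOn_Ioc_of_le hyx).2 hu'
  calc (u x - u y) ^ 2 ≤ (∫ s in Ioc y x, |√(a s) * u' s * (1 / √(a s))|) ^ 2 := by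
        rw [hftc, ← sq_abs]
        gcongr
        refine abs_integral_le_integral_abs.trans_eq
          (setIntegral_congr_fun measurableSet_Ioc fun s hs => by rw [hprod s hs])
    _ ≤ (∫ s in Ioc y x, (√(a s) * u' s) ^ 2) * ∫ s in Ioc y x, (1 / √(a s)) ^ 2 :=
        sq_integral_abs_mul_le hau hg
    _ = (∫ s in Ioc y x, a s * u' s ^ 2) * ∫ s in y..x, 1 / a s := by
        rw [intervalIntegral.integral_of_le hyx]
        congr 1 <;> refine setIntegral_congr_fun measurableSet_Ioc fun s hs => ?_
        · rw [mul_pow, sq_sqrt (hpos s hs).le]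
        · rw [div_pow, one_pow, sq_sqrt (hpos s hs).le]

theorem exists_mem_le_setIntegral_div_measureReal {α : Type*} [MeasurableSpace α]
    {μ : Measure α} {f : α → ℝ} {s t : Set α} (hst : s ⊆ t) (hs₀ : μ s ≠ 0) (hs : μ s ≠ ⊤)
    (hf : IntegrableOn f t μ) (hf₀ : 0 ≤ᵐ[μ.restrict t] f) :
    ∃ y ∈ s, f y ≤ (∫ x in t, f x ∂μ) / μ.real s := by
  obtain ⟨y, hy, hfy⟩ := exists_le_setAverage hs₀ hs (hf.mono_set hst)
  refine ⟨y, hy, hfy.trans ?_⟩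
  rw [setAverage_eq, smul_eq_mul, inv_mul_eq_div]
  exact div_le_div_of_nonneg_right (setIntegral_mono_set hf hf₀ hst.eventuallyLE)
    measureReal_nonneg

theorem exists_mem_Ioo_zero_half_sq_le_two_mul {u : ℝ → ℝ} {M : ℝ}
    (hu : MemLp u 2 (volume.restrict (Ioo (-1) 1))) (hM : ∫ x in Ioo (-1:ℝ) 1, u x ^ 2 ≤ M) :
    ∃ y ∈ Ioo (0:ℝ) (1 / 2), u y ^ 2 ≤ 2 * M := by
  obtain ⟨y, hy, huy⟩ := exists_mem_le_setIntegral_div_measureReal (s := Ioo 0 (1 / 2))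
    (Ioo_subset_Ioo (by norm_num) (by norm_num)) (by simp) measure_Ioo_lt_top.ne
    hu.integrable_sq (ae_of_all _ fun _ => sq_nonneg _)
  rw [Real.volume_real_Ioo_of_le (by norm_num), sub_zero] at huy
  exact ⟨y, hy, by linarith⟩

theorem tendsto_setIntegral_Ioo_sub_inter_nhdsGT_zero {f : ℝ → ℝ} {s : Set ℝ} (b : ℝ)
    (hf : IntegrableOn f s) :
    Tendsto (fun h => ∫ x in Ioo (b - h) b ∩ s, f x) (𝓝[>] 0) (𝓝 0) := by
  have hvol : Tendsto (fun h => volume.restrict s (Ioo (b - h) b)) (𝓝[>] 0) (𝓝 0) := by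
    have hlen : Tendsto (fun h : ℝ => ENNReal.ofReal h) (𝓝[>] 0) (𝓝 0) :=
      (ENNReal.continuous_ofReal.tendsto' 0 0 ENNReal.ofReal_zero).mono_left nhdsWithin_le_nhds
    refine tendsto_of_tendsto_of_tendsto_of_le_of_le tendsto_const_nhds hlen (fun _ => zero_le)
      fun h => (Measure.restrict_le_self _).trans ?_
    rw [Real.volume_Ioo, sub_sub_cancel]
  simpa only [Measure.restrict_restrict measurableSet_Ioo] using
    hf.tendsto_setIntegral_nhds_zero hvol

theorem sq_le_two_mul_sq_add_two_mul_energy_mul_primitive_inv {a u u' A : ℝ → ℝ} {E y x : ℝ}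
    (ha : ContinuousOn a (Ioo (-1) 1)) (hapos : ∀ x ∈ Ioo (-1:ℝ) 1, 0 < a x)
    (hA : ∀ x, A x = ∫ s in (0:ℝ)..x, 1 / a s)
    (hu : ∀ x ∈ Ioo (-1:ℝ) 1, HasDerivAt u (u' x) x)
    (hau : MemLp (fun x => √(a x) * u' x) 2 (volume.restrict (Ioo (-1) 1)))
    (hE : ∫ x in Ioo (-1:ℝ) 1, a x * u' x ^ 2 ≤ E) (hy : 0 ≤ y) (hyx : y ≤ x) (hx : x < 1) :
    u x ^ 2 ≤ 2 * u y ^ 2 + 2 * E * A x := by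
  have hyx_sub : Icc y x ⊆ Ioo (-1) 1 := fun s hs => ⟨by linarith [hs.1], hs.2.trans_lt hx⟩
  have hosc := sq_sub_le_setIntegral_mul_integral_inv hyx (ha.mono hyx_sub)
    (fun s hs => hapos s (hyx_sub hs)) (fun s hs => hu s (hyx_sub hs))
    (hau.mono_measure (Measure.restrict_mono (Ioc_subset_Icc_self.trans hyx_sub) le_rfl))
  have henergy : IntegrableOn (fun s => a s * u' s ^ 2) (Ioo (-1) 1) :=
    hau.integrable_sq.congr (ae_restrict_of_forall_mem measurableSet_Ioo fun s hs => by
      simp only [mul_pow, sq_sqrt (hapos s hs).le])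
  have henergy₀ : ∀ s ∈ Ioo (-1:ℝ) 1, 0 ≤ a s * u' s ^ 2 := fun s hs =>
    mul_nonneg (hapos s hs).le (sq_nonneg _)
  have hlocal : ∫ s in Ioc y x, a s * u' s ^ 2 ≤ E :=
    (setIntegral_mono_set henergy (ae_restrict_of_forall_mem measurableSet_Ioo henergy₀)
      (Ioc_subset_Icc_self.trans hyx_sub).eventuallyLE).trans hE
  have hE₀ : 0 ≤ E := (setIntegral_nonneg measurableSet_Ioo henergy₀).trans hE
  have h0x : Icc 0 x ⊆ Ioo (-1) 1 := fun s hs => ⟨by linarith [hs.1], hs.2.trans_lt hx⟩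
  have hinv : ∫ s in y..x, 1 / a s ≤ A x := by
    rw [hA]
    refine intervalIntegral.integral_mono_interval hy hyx le_rfl
      (ae_restrict_of_forall_mem measurableSet_Ioc fun s hs =>
        (one_div_pos.2 (hapos s (h0x (Ioc_subset_Icc_self hs)))).le) ?_
    exact (ContinuousOn.intervalIntegrable_of_Icc (hy.trans hyx)
      (continuousOn_const.div (ha.mono h0x) fun s hs => (hapos s (h0x hs)).ne'))
  have hinv₀ : 0 ≤ ∫ s in y..x, 1 / a s := intervalIntegral.integral_nonneg hyx fun s hs =>
    (one_div_pos.2 (hapos s (hyx_sub hs))).le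
  have hdiff : (u x - u y) ^ 2 ≤ E * A x := hosc.trans (mul_le_mul hlocal hinv hinv₀ hE₀)
  nlinarith [sq_nonneg (u x - 2 * u y)]

theorem uniform_smallness_near_endpoint_general
    (a : ℝ → ℝ) (ha : ContDiffOn ℝ 1 a (Icc (-1) 1))
    (hapos : ∀ x ∈ Ioo (-1:ℝ) 1, 0 < a x)
    (A : ℝ → ℝ) (hA : ∀ x, A x = ∫ s in (0:ℝ)..x, 1 / a s)
    (hAint : IntegrableOn A (Ioo (-1) 1))
    (R : ℝ) :
    ∀ ε > 0, ∃ δ > 0, ∀ h : ℝ, 0 < h → h < δ →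
      ∀ (u u' : ℝ → ℝ),
        (∀ x ∈ Ioo (-1:ℝ) 1, HasDerivAt u (u' x) x) →
        MemLp u 2 (volume.restrict (Ioo (-1) 1)) →
        MemLp (fun x => Real.sqrt (a x) * u' x) 2 (volume.restrict (Ioo (-1) 1)) →
        (∫ x in Ioo (-1:ℝ) 1, u x ^ 2) + (∫ x in Ioo (-1:ℝ) 1, a x * u' x ^ 2) ≤ R ^ 2 →
        ∫ x in Ioo (1 - h) 1, u x ^ 2 ≤ ε := by
  intro ε hε
  set G : ℝ → ℝ := fun x => 4 * R ^ 2 + 2 * R ^ 2 * A x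
  have hG : IntegrableOn G (Ioo (-1) 1) :=
    (integrableOn_const measure_Ioo_lt_top.ne).add (hAint.const_mul _)
  have hsmall : ∀ᶠ h in 𝓝[>] 0, ∫ x in Ioo (1 - h) 1 ∩ Ioo (-1) 1, G x < ε ∧ h < 1 / 2 :=
    ((tendsto_setIntegral_Ioo_sub_inter_nhdsGT_zero 1 hG).eventually_lt_const hε).and
      (eventually_nhdsWithin_of_eventually_nhds (eventually_lt_nhds (by norm_num)))
  obtain ⟨δ, hδ, hδsmall⟩ := mem_nhdsGT_iff_exists_Ioo_subset.1 hsmall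
  refine ⟨δ, hδ, fun h hh hhδ u u' hu hu₂ hau hnorm => ?_⟩
  obtain ⟨hGε, hh₂⟩ := hδsmall ⟨hh, hhδ⟩
  have hmass : ∫ x in Ioo (-1:ℝ) 1, u x ^ 2 ≤ R ^ 2 := by
    linarith [setIntegral_nonneg (μ := volume) measurableSet_Ioo
      fun x (hx : x ∈ Ioo (-1:ℝ) 1) => mul_nonneg (hapos x hx).le (sq_nonneg (u' x))]
  have henergy : ∫ x in Ioo (-1:ℝ) 1, a x * u' x ^ 2 ≤ R ^ 2 := by
    linarith [setIntegral_nonneg (μ := volume) measurableSet_Ioo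
      fun x (_ : x ∈ Ioo (-1:ℝ) 1) => sq_nonneg (u x)]
  obtain ⟨y, hy, huy⟩ := exists_mem_Ioo_zero_half_sq_le_two_mul hu₂ hmass
  have hsub : Ioo (1 - h) 1 ⊆ Ioo (-1) 1 := Ioo_subset_Ioo_left (by linarith)
  have hpointwise : ∀ x ∈ Ioo (1 - h) 1, u x ^ 2 ≤ G x := fun x hx => by
    have := sq_le_two_mul_sq_add_two_mul_energy_mul_primitive_inv
      (ha.continuousOn.mono Ioo_subset_Icc_self) hapos hA hu hau
      henergy hy.1.le (by linarith [hy.2, hx.1]) hx.2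
    show u x ^ 2 ≤ 4 * R ^ 2 + 2 * R ^ 2 * A x
    linarith
  rw [inter_eq_self_of_subset_left hsub] at hGε
  calc ∫ x in Ioo (1 - h) 1, u x ^ 2 ≤ ∫ x in Ioo (1 - h) 1, G x :=
        setIntegral_mono_on (IntegrableOn.mono_set hu₂.integrable_sq hsub) (hG.mono_set hsub)
          measurableSet_Ioo hpointwise
    _ ≤ ε := hGε.le

/-- Uniform smallness of the L² mass near the degenerate endpoint x = 1:
    sup_{‖u‖_{H¹_a} ≤ R} ∫_{1-h}^1 u² dx → 0 as h → 0⁺. -/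
theorem uniform_smallness_near_endpoint
    (a : ℝ → ℝ) (ha : ContDiffOn ℝ 1 a (Icc (-1) 1))
    (hapos : ∀ x ∈ Ioo (-1:ℝ) 1, 0 < a x)
    (ha1 : a (-1) = 0) (ha2 : a 1 = 0)
    (A : ℝ → ℝ) (hA : ∀ x, A x = ∫ s in (0:ℝ)..x, 1 / a s)
    (hAint : IntegrableOn A (Ioo (-1) 1))
    (R : ℝ) (hR : 0 < R) :
    ∀ ε > 0, ∃ δ > 0, ∀ h : ℝ, 0 < h → h < δ →
      ∀ (u u' : ℝ → ℝ),
        (∀ x ∈ Ioo (-1:ℝ) 1, HasDerivAt u (u' x) x) →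
        MemLp u 2 (volume.restrict (Ioo (-1) 1)) →
        MemLp (fun x => Real.sqrt (a x) * u' x) 2 (volume.restrict (Ioo (-1) 1)) →
        (∫ x in Ioo (-1:ℝ) 1, u x ^ 2) + (∫ x in Ioo (-1:ℝ) 1, a x * u' x ^ 2) ≤ R ^ 2 →
        ∫ x in Ioo (1 - h) 1, u x ^ 2 ≤ ε :=
  uniform_smallness_near_endpoint_general a ha hapos A hA hAint R
end

section
/- Let a ∈ C¹([-1,1]) be positive on (-1,1), vanish at ±1, with A(x) = ∫₀ˣ ds/a(s) ∈ L¹(-1,1). Then for every R > 0, sup over u ∈ H¹_a(-1,1) with ‖u‖_{H¹_a} ≤ R of ∫_{-1}^{1-h} |u(x+h) - u(x)|² dx tends to 0 as h → 0⁺, with the explicit bound ∫_{-1}^{1-h} |u(x+h)-u(x)|² dx ≤ R² [∫_{1-h}^{1} A(x) dx − ∫_{-1}^{-1+h} A(x) dx]. -/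
/-! By the fundamental theorem of calculus and the Cauchy–Schwarz inequality with weight `a`,
`(u (x + h) - u x)² ≤ (∫_x^{x+h} a u'²) (A (x + h) - A x) ≤ R² (A (x + h) - A x)`.
Integrating in `x`, the translates of `A` cancel except on the two boundary layers of width `h`,
whose integrals tend to `0` by absolute continuity of the integral of `A ∈ L¹`. -/

open MeasureTheory Set Real Filter Topology

theorem MeasureTheory.MemLp.inner_toLp_eq_integral_mul {α : Type*} [MeasurableSpace α]
    {μ : Measure α} {f g : α → ℝ} (hf : MemLp f 2 μ) (hg : MemLp g 2 μ) :
    inner ℝ (hf.toLp f) (hg.toLp g) = ∫ x, f x * g x ∂μ := by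
  rw [L2.inner_def]
  refine integral_congr_ae ?_
  filter_upwards [hf.coeFn_toLp, hg.coeFn_toLp] with x hfx hgx
  simp [hfx, hgx, mul_comm]

theorem sq_integral_mul_le_integral_sq_mul_integral_sq {α : Type*} [MeasurableSpace α]
    {μ : Measure α} {f g : α → ℝ} (hf : MemLp f 2 μ) (hg : MemLp g 2 μ) :
    (∫ x, f x * g x ∂μ) ^ 2 ≤ (∫ x, f x ^ 2 ∂μ) * ∫ x, g x ^ 2 ∂μ := by
  simpa only [hf.inner_toLp_eq_integral_mul, hg.inner_toLp_eq_integral_mul, ← sq] using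
    real_inner_mul_inner_self_le (hf.toLp f) (hg.toLp g)

theorem sq_sub_le_integral_mul_integral_inv {a u u' : ℝ → ℝ} {x y : ℝ} (hxy : x ≤ y)
    (ha : ContinuousOn a (Icc x y)) (hpos : ∀ t ∈ Icc x y, 0 < a t)
    (hu : ∀ t ∈ Icc x y, HasDerivAt u (u' t) t)
    (hL2 : MemLp (fun t => √(a t) * u' t) 2 (volume.restrict (Ioc x y))) :
    (u y - u x) ^ 2 ≤ (∫ t in x..y, a t * u' t ^ 2) * ∫ t in x..y, 1 / a t := by
  set g : ℝ → ℝ := fun t => (√(a t))⁻¹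
  have hgc : ContinuousOn g (Icc x y) :=
    ha.sqrt.inv₀ fun t ht => (sqrt_pos.2 (hpos t ht)).ne'
  have hg : MemLp g 2 (volume.restrict (Ioc x y)) := by
    rw [memLp_two_iff_integrable_sq
      ((hgc.mono Ioc_subset_Icc_self).aestronglyMeasurable measurableSet_Ioc)]
    exact ((hgc.pow 2).integrableOn_compact isCompact_Icc).mono_set Ioc_subset_Icc_self
  have hfactor : ∀ t ∈ Ioc x y, √(a t) * u' t * g t = u' t := fun t ht => by
    rw [mul_right_comm, mul_inv_cancel₀ (sqrt_pos.2 (hpos t (Ioc_subset_Icc_self ht))).ne',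
      one_mul]
  have hsq_f : ∀ t ∈ Ioc x y, (√(a t) * u' t) ^ 2 = a t * u' t ^ 2 := fun t ht => by
    rw [mul_pow, sq_sqrt (hpos t (Ioc_subset_Icc_self ht)).le]
  have hsq_g : ∀ t ∈ Ioc x y, g t ^ 2 = 1 / a t := fun t ht => by
    rw [inv_pow, sq_sqrt (hpos t (Ioc_subset_Icc_self ht)).le, one_div]
  have hu'_int : IntegrableOn u' (Ioc x y) :=
    (hL2.integrable_mul hg).congr ((ae_restrict_iff' measurableSet_Ioc).2 <|
      Eventually.of_forall hfactor)
  have hFTC : u y - u x = ∫ t in Ioc x y, √(a t) * u' t * g t := by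
    rw [setIntegral_congr_fun measurableSet_Ioc hfactor, ← intervalIntegral.integral_of_le hxy,
      intervalIntegral.integral_eq_sub_of_hasDerivAt
        (fun t ht => hu t (by rwa [uIcc_of_le hxy] at ht))
        ((intervalIntegrable_iff_integrableOn_Ioc_of_le hxy).2 hu'_int)]
  calc (u y - u x) ^ 2
      ≤ (∫ t in Ioc x y, (√(a t) * u' t) ^ 2) * ∫ t in Ioc x y, g t ^ 2 :=
        hFTC ▸ sq_integral_mul_le_integral_sq_mul_integral_sq hL2 hg
    _ = (∫ t in x..y, a t * u' t ^ 2) * ∫ t in x..y, 1 / a t := by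
        rw [setIntegral_congr_fun measurableSet_Ioc hsq_f,
          setIntegral_congr_fun measurableSet_Ioc hsq_g, intervalIntegral.integral_of_le hxy,
          intervalIntegral.integral_of_le hxy]

theorem IntervalIntegrable.mono_Icc {f : ℝ → ℝ} {a b p q : ℝ}
    (hf : IntervalIntegrable f volume a b) (hp : p ∈ Icc a b) (hq : q ∈ Icc a b) :
    IntervalIntegrable f volume p q :=
  hf.mono_set (uIcc_subset_uIcc (Icc_subset_uIcc hp) (Icc_subset_uIcc hq))

theorem IntervalIntegrable.comp_add_right_sub {f : ℝ → ℝ} {a b h : ℝ}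
    (hf : IntervalIntegrable f volume a b) (hh : 0 ≤ h) (hhb : h ≤ b - a) :
    IntervalIntegrable (fun x => f (x + h) - f x) volume a (b - h) := by
  have hfh : IntervalIntegrable f volume (a + h) b :=
    hf.mono_Icc ⟨by linarith, by linarith⟩ ⟨by linarith, le_rfl⟩
  have hshift : IntervalIntegrable (fun x => f (x + h)) volume a (b - h) := by
    simpa using hfh.comp_add_right h
  exact hshift.sub (hf.mono_Icc ⟨le_rfl, by linarith⟩ ⟨by linarith, by linarith⟩)

theorem intervalIntegral.integral_comp_add_right_sub {f : ℝ → ℝ} {a b h : ℝ}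
    (hf : IntervalIntegrable f volume a b) (hh : 0 ≤ h) (hhb : h ≤ b - a) :
    ∫ x in a..b - h, (f (x + h) - f x) = (∫ x in b - h..b, f x) - ∫ x in a..a + h, f x := by
  have h₁ : IntervalIntegrable f volume a (a + h) :=
    hf.mono_Icc ⟨le_rfl, by linarith⟩ ⟨by linarith, by linarith⟩
  have h₂ : IntervalIntegrable f volume (a + h) b :=
    hf.mono_Icc ⟨by linarith, by linarith⟩ ⟨by linarith, le_rfl⟩
  have h₃ : IntervalIntegrable f volume a (b - h) :=
    hf.mono_Icc ⟨le_rfl, by linarith⟩ ⟨by linarith, by linarith⟩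
  have h₄ : IntervalIntegrable f volume (b - h) b :=
    hf.mono_Icc ⟨by linarith, by linarith⟩ ⟨by linarith, le_rfl⟩
  rw [integral_sub (by simpa using h₂.comp_add_right h) h₃, integral_comp_add_right,
    sub_add_cancel]
  linarith [integral_add_adjacent_intervals h₁ h₂, integral_add_adjacent_intervals h₃ h₄]

theorem sub_eq_intervalIntegral_inv {a A : ℝ → ℝ} {c d x₀ : ℝ} (ha : ContinuousOn a (Ioo c d))
    (hpos : ∀ x ∈ Ioo c d, 0 < a x) (hx₀ : x₀ ∈ Ioo c d) (hA : ∀ x, A x = ∫ t in x₀..x, 1 / a t)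
    {x y : ℝ} (hx : x ∈ Ioo c d) (hy : y ∈ Ioo c d) :
    A y - A x = ∫ t in x..y, 1 / a t := by
  have hint : ∀ w ∈ Ioo c d, IntervalIntegrable (fun t => 1 / a t) volume x₀ w := fun w hw =>
    have hsub := ordConnected_Ioo.uIcc_subset hx₀ hw
    (continuousOn_const.div (ha.mono hsub) fun t ht => (hpos t (hsub ht)).ne').intervalIntegrable
  rw [hA, hA, intervalIntegral.integral_interval_sub_left (hint y hy) (hint x hx)]

theorem MeasureTheory.IntegrableOn.tendsto_setIntegral_nhds_zero {α ι : Type*}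
    [MeasurableSpace α] {μ : Measure α} {f : α → ℝ} {I : Set α} (hf : IntegrableOn f I μ)
    {l : Filter ι} {s : ι → Set α} (hsI : ∀ᶠ i in l, s i ⊆ I) (hs : Tendsto (μ ∘ s) l (𝓝 0)) :
    Tendsto (fun i => ∫ x in s i, f x ∂μ) l (𝓝 0) := by
  refine (Integrable.tendsto_setIntegral_nhds_zero hf (tendsto_of_tendsto_of_tendsto_of_le_of_le
    tendsto_const_nhds hs (fun _ => zero_le) fun i => Measure.restrict_apply_le _ _)).congr' ?_
  filter_upwards [hsI] with i hi
  rw [Measure.restrict_restrict_of_subset hi]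

theorem tendsto_setIntegral_Ioo_endpoints_nhdsGT_zero {f : ℝ → ℝ} {c d : ℝ} (hcd : c < d)
    (hf : IntegrableOn f (Ioo c d)) :
    Tendsto (fun h => (∫ x in Ioo (d - h) d, f x) - ∫ x in Ioo c (c + h), f x)
      (𝓝[>] 0) (𝓝 0) := by
  have hsmall : ∀ᶠ h in 𝓝[>] (0:ℝ), h < d - c :=
    eventually_nhdsWithin_of_eventually_nhds (eventually_lt_nhds (by linarith))
  have hvol : Tendsto (fun h : ℝ => ENNReal.ofReal h) (𝓝[>] 0) (𝓝 0) := by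
    simpa using (ENNReal.tendsto_ofReal (tendsto_id (x := 𝓝 (0:ℝ)))).mono_left nhdsWithin_le_nhds
  simpa using (hf.tendsto_setIntegral_nhds_zero (s := fun h => Ioo (d - h) d)
      (hsmall.mono fun h hh => Ioo_subset_Ioo (by linarith) le_rfl)
      (by simpa [Function.comp_def] using hvol)).sub
    (hf.tendsto_setIntegral_nhds_zero (s := fun h => Ioo c (c + h))
      (hsmall.mono fun h hh => Ioo_subset_Ioo le_rfl (by linarith))
      (by simpa [Function.comp_def] using hvol))

theorem sq_sub_comp_add_le_mul_sub {a A u u' : ℝ → ℝ} {c d x₀ M h x : ℝ}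
    (ha : ContinuousOn a (Ioo c d)) (hpos : ∀ x ∈ Ioo c d, 0 < a x) (hx₀ : x₀ ∈ Ioo c d)
    (hA : ∀ x, A x = ∫ t in x₀..x, 1 / a t) (hu : ∀ x ∈ Ioo c d, HasDerivAt u (u' x) x)
    (hL2 : MemLp (fun x => √(a x) * u' x) 2 (volume.restrict (Ioo c d)))
    (hM : ∫ x in Ioo c d, a x * u' x ^ 2 ≤ M) (hh : 0 < h) (hx : x ∈ Ioo c (d - h)) :
    (u (x + h) - u x) ^ 2 ≤ M * (A (x + h) - A x) := by
  have hle : x ≤ x + h := by linarith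
  have hsub : Icc x (x + h) ⊆ Ioo c d := Icc_subset_Ioo hx.1 (by linarith [hx.2])
  have hK : IntegrableOn (fun x => a x * u' x ^ 2) (Ioo c d) :=
    hL2.integrable_sq.congr <| (ae_restrict_iff' measurableSet_Ioo).2 <|
      Eventually.of_forall fun x hx => by simp only [mul_pow, sq_sqrt (hpos x hx).le]
  have hlocal : ∫ t in x..x + h, a t * u' t ^ 2 ≤ M := by
    rw [intervalIntegral.integral_of_le hle]
    refine le_trans (setIntegral_mono_set hK ?_ (Ioc_subset_Icc_self.trans hsub).eventuallyLE) hM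
    exact (ae_restrict_iff' measurableSet_Ioo).2 <| Eventually.of_forall fun t ht =>
      mul_nonneg (hpos t ht).le (sq_nonneg _)
  have hinv_nonneg : 0 ≤ ∫ t in x..x + h, 1 / a t :=
    intervalIntegral.integral_nonneg hle fun t ht => (one_div_pos.2 (hpos t (hsub ht))).le
  rw [sub_eq_intervalIntegral_inv ha hpos hx₀ hA (hsub (left_mem_Icc.2 hle))
    (hsub (right_mem_Icc.2 hle))]
  refine le_trans ?_ (mul_le_mul_of_nonneg_right hlocal hinv_nonneg)
  exact sq_sub_le_integral_mul_integral_inv hle (ha.mono hsub) (fun t ht => hpos t (hsub ht))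
    (fun t ht => hu t (hsub ht))
    (hL2.mono_measure (Measure.restrict_mono (Ioc_subset_Icc_self.trans hsub) le_rfl))

theorem setIntegral_sq_sub_comp_add_le {a A u u' : ℝ → ℝ} {c d x₀ M h : ℝ}
    (ha : ContinuousOn a (Ioo c d)) (hpos : ∀ x ∈ Ioo c d, 0 < a x) (hx₀ : x₀ ∈ Ioo c d)
    (hA : ∀ x, A x = ∫ t in x₀..x, 1 / a t) (hAint : IntegrableOn A (Ioo c d))
    (hu : ∀ x ∈ Ioo c d, HasDerivAt u (u' x) x)
    (hL2 : MemLp (fun x => √(a x) * u' x) 2 (volume.restrict (Ioo c d)))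
    (hM : ∫ x in Ioo c d, a x * u' x ^ 2 ≤ M) (hh : 0 < h) (hhcd : h < d - c) :
    ∫ x in Ioo c (d - h), (u (x + h) - u x) ^ 2 ≤
      M * ((∫ x in Ioo (d - h) d, A x) - ∫ x in Ioo c (c + h), A x) := by
  have hA' : IntervalIntegrable A volume c d :=
    (intervalIntegrable_iff_integrableOn_Ioo_of_le (by linarith)).2 hAint
  have hΔ : IntegrableOn (fun x => A (x + h) - A x) (Ioo c (d - h)) :=
    ((intervalIntegrable_iff_integrableOn_Ioo_of_le (by linarith)).1
      (hA'.comp_add_right_sub hh.le hhcd.le))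
  calc ∫ x in Ioo c (d - h), (u (x + h) - u x) ^ 2
      ≤ ∫ x in Ioo c (d - h), M * (A (x + h) - A x) :=
        integral_mono_of_nonneg (Eventually.of_forall fun _ => sq_nonneg _) (hΔ.const_mul M)
          ((ae_restrict_iff' measurableSet_Ioo).2 <| Eventually.of_forall fun x hx =>
            sq_sub_comp_add_le_mul_sub ha hpos hx₀ hA hu hL2 hM hh hx)
    _ = M * ((∫ x in Ioo (d - h) d, A x) - ∫ x in Ioo c (c + h), A x) := by
        rw [integral_const_mul, ← integral_Ioc_eq_integral_Ioo, ← integral_Ioc_eq_integral_Ioo,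
          ← integral_Ioc_eq_integral_Ioo, ← intervalIntegral.integral_of_le (by linarith),
          ← intervalIntegral.integral_of_le (by linarith),
          ← intervalIntegral.integral_of_le (by linarith),
          intervalIntegral.integral_comp_add_right_sub hA' hh.le hhcd.le]

theorem uniform_translation_equicontinuity_general
    (a : ℝ → ℝ) (ha : ContDiffOn ℝ 1 a (Icc (-1) 1))
    (hapos : ∀ x ∈ Ioo (-1:ℝ) 1, 0 < a x)
    (A : ℝ → ℝ) (hA : ∀ x, A x = ∫ s in (0:ℝ)..x, 1 / a s)
    (hAint : IntegrableOn A (Ioo (-1) 1))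
    (R : ℝ) :
    (∀ h : ℝ, 0 < h → h < 2 →
      ∀ (u u' : ℝ → ℝ),
        (∀ x ∈ Ioo (-1:ℝ) 1, HasDerivAt u (u' x) x) →
        MemLp u 2 (volume.restrict (Ioo (-1) 1)) →
        MemLp (fun x => Real.sqrt (a x) * u' x) 2 (volume.restrict (Ioo (-1) 1)) →
        (∫ x in Ioo (-1:ℝ) 1, u x ^ 2) + (∫ x in Ioo (-1:ℝ) 1, a x * u' x ^ 2) ≤ R ^ 2 →
        ∫ x in Ioo (-1:ℝ) (1 - h), (u (x + h) - u x) ^ 2 ≤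
          R ^ 2 * ((∫ x in Ioo (1 - h) 1, A x) - ∫ x in Ioo (-1:ℝ) (-1 + h), A x))
    ∧
    (∀ ε > 0, ∃ δ > 0, ∀ h : ℝ, 0 < h → h < δ →
      ∀ (u u' : ℝ → ℝ),
        (∀ x ∈ Ioo (-1:ℝ) 1, HasDerivAt u (u' x) x) →
        MemLp u 2 (volume.restrict (Ioo (-1) 1)) →
        MemLp (fun x => Real.sqrt (a x) * u' x) 2 (volume.restrict (Ioo (-1) 1)) →
        (∫ x in Ioo (-1:ℝ) 1, u x ^ 2) + (∫ x in Ioo (-1:ℝ) 1, a x * u' x ^ 2) ≤ R ^ 2 →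
        ∫ x in Ioo (-1:ℝ) (1 - h), (u (x + h) - u x) ^ 2 ≤ ε) := by
  have hbound : ∀ {h : ℝ} {u u' : ℝ → ℝ}, 0 < h → h < 2 →
      (∀ x ∈ Ioo (-1:ℝ) 1, HasDerivAt u (u' x) x) →
      MemLp (fun x => √(a x) * u' x) 2 (volume.restrict (Ioo (-1) 1)) →
      (∫ x in Ioo (-1:ℝ) 1, u x ^ 2) + (∫ x in Ioo (-1:ℝ) 1, a x * u' x ^ 2) ≤ R ^ 2 →
      ∫ x in Ioo (-1:ℝ) (1 - h), (u (x + h) - u x) ^ 2 ≤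
        R ^ 2 * ((∫ x in Ioo (1 - h) 1, A x) - ∫ x in Ioo (-1:ℝ) (-1 + h), A x) := by
    intro h u u' hh h2 hu hL2 hR
    have hu2 : 0 ≤ ∫ x in Ioo (-1:ℝ) 1, u x ^ 2 :=
      setIntegral_nonneg measurableSet_Ioo fun x _ => sq_nonneg (u x)
    exact setIntegral_sq_sub_comp_add_le (ha.continuousOn.mono Ioo_subset_Icc_self) hapos
      ⟨by norm_num, by norm_num⟩ hA hAint hu hL2 (by linarith) hh (by linarith)
  refine ⟨fun h hh h2 u u' hu _ hL2 hR => hbound hh h2 hu hL2 hR, fun ε hε => ?_⟩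
  have hsmall : ∀ᶠ h in 𝓝[>] (0:ℝ), h < 2 ∧
      R ^ 2 * ((∫ x in Ioo (1 - h) 1, A x) - ∫ x in Ioo (-1:ℝ) (-1 + h), A x) < ε :=
    (eventually_nhdsWithin_of_eventually_nhds (eventually_lt_nhds two_pos)).and
      (((tendsto_setIntegral_Ioo_endpoints_nhdsGT_zero (by norm_num) hAint).const_mul
        (R ^ 2)).eventually (gt_mem_nhds (by simpa using hε)))
  obtain ⟨δ, hδ, hδsmall⟩ := (nhdsGT_basis (0:ℝ)).eventually_iff.1 hsmall
  exact ⟨δ, hδ, fun h hh hhδ u u' hu _ hL2 hR =>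
    (hbound hh (hδsmall ⟨hh, hhδ⟩).1 hu hL2 hR).trans (hδsmall ⟨hh, hhδ⟩).2.le⟩

/-- Uniform L² equicontinuity of translations in H¹_a(-1,1), with the explicit bound
    ∫_{-1}^{1-h}|u(x+h)-u(x)|² dx ≤ R²[∫_{1-h}^1 A − ∫_{-1}^{-1+h} A], and the resulting
    uniform convergence to 0 of the sup over the ball of radius R as h → 0⁺. -/
theorem uniform_translation_equicontinuity
    (a : ℝ → ℝ) (ha : ContDiffOn ℝ 1 a (Icc (-1) 1))
    (hapos : ∀ x ∈ Ioo (-1:ℝ) 1, 0 < a x)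
    (ha1 : a (-1) = 0) (ha2 : a 1 = 0)
    (A : ℝ → ℝ) (hA : ∀ x, A x = ∫ s in (0:ℝ)..x, 1 / a s)
    (hAint : IntegrableOn A (Ioo (-1) 1))
    (R : ℝ) (hR : 0 < R) :
    (∀ h : ℝ, 0 < h → h < 2 →
      ∀ (u u' : ℝ → ℝ),
        (∀ x ∈ Ioo (-1:ℝ) 1, HasDerivAt u (u' x) x) →
        MemLp u 2 (volume.restrict (Ioo (-1) 1)) →
        MemLp (fun x => Real.sqrt (a x) * u' x) 2 (volume.restrict (Ioo (-1) 1)) →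
        (∫ x in Ioo (-1:ℝ) 1, u x ^ 2) + (∫ x in Ioo (-1:ℝ) 1, a x * u' x ^ 2) ≤ R ^ 2 →
        ∫ x in Ioo (-1:ℝ) (1 - h), (u (x + h) - u x) ^ 2 ≤
          R ^ 2 * ((∫ x in Ioo (1 - h) 1, A x) - ∫ x in Ioo (-1:ℝ) (-1 + h), A x))
    ∧
    (∀ ε > 0, ∃ δ > 0, ∀ h : ℝ, 0 < h → h < δ →
      ∀ (u u' : ℝ → ℝ),
        (∀ x ∈ Ioo (-1:ℝ) 1, HasDerivAt u (u' x) x) →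
        MemLp u 2 (volume.restrict (Ioo (-1) 1)) →
        MemLp (fun x => Real.sqrt (a x) * u' x) 2 (volume.restrict (Ioo (-1) 1)) →
        (∫ x in Ioo (-1:ℝ) 1, u x ^ 2) + (∫ x in Ioo (-1:ℝ) 1, a x * u' x ^ 2) ≤ R ^ 2 →
        ∫ x in Ioo (-1:ℝ) (1 - h), (u (x + h) - u x) ^ 2 ≤ ε) :=
  uniform_translation_equicontinuity_general a ha hapos A hA hAint R
end

section
/- Let a ∈ C¹([-1,1]) be positive on (-1,1) and vanish at ±1, with ∫₀ˣ ds/a(s) defining a function A ∈ L¹(-1,1). Then the embedding of the weighted Sobolev space H¹_a(-1,1) into L²(-1,1) is compact: every bounded sequence in H¹_a(-1,1) has a subsequence converging strongly in L²(-1,1). -/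
/-!
Cauchy–Schwarz against the weight gives `(u x - u y)² ≤ (∫ a u'²) |A x - A y|`. Since `A` is
continuous on `(-1, 1)`, a bounded sequence in `H¹_a` is therefore equicontinuous there; comparing
with a point of `[-1/2, 1/2]` where `u²` lies below its mean, it is also dominated by
`C (1 + |A|)`, which is integrable because `A ∈ L¹`. A diagonal (Arzelà–Ascoli) argument
yields a pointwise convergent subsequence, and dominated convergence turns this into convergence
in `L²`.
-/

open MeasureTheory Set Real Filter Topology

theorem EquicontinuousAt.cauchySeq_of_mem_closure {X α : Type*} [TopologicalSpace X]
    [PseudoMetricSpace α] {F : ℕ → X → α} {s : Set X} {x : X} (hF : EquicontinuousAt F x)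
    (hs : ∀ y ∈ s, CauchySeq (F · y)) (hx : x ∈ closure s) : CauchySeq (F · x) := by
  rw [Metric.cauchySeq_iff']
  intro ε hε
  obtain ⟨y, hxy, hys⟩ : ∃ y, (∀ n, dist (F n x) (F n y) < ε / 3) ∧ y ∈ s :=
    mem_closure_iff_nhds.1 hx _ (Metric.equicontinuousAt_iff_right.1 hF _ (by positivity))
  obtain ⟨N, hN⟩ := Metric.cauchySeq_iff'.1 (hs y hys) _ (by positivity : 0 < ε / 3)
  refine ⟨N, fun n hn => ?_⟩
  calc dist (F n x) (F N x)
      ≤ dist (F n x) (F n y) + dist (F n y) (F N y) + dist (F N y) (F N x) :=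
        dist_triangle4 _ _ _ _
    _ < ε / 3 + ε / 3 + ε / 3 := by
        gcongr
        exacts [hxy n, hN n hn, dist_comm (F N x) (F N y) ▸ hxy N]
    _ = ε := by ring

theorem Equicontinuous.exists_subseq_tendsto {X α : Type*} [TopologicalSpace X]
    [TopologicalSpace.SeparableSpace X] [PseudoMetricSpace α] {F : ℕ → X → α}
    (hF : Equicontinuous F) (hK : ∀ x, ∃ K, IsCompact K ∧ ∀ n, F n x ∈ K) :
    ∃ φ : ℕ → ℕ, StrictMono φ ∧ ∃ f : X → α,
      ∀ x, Tendsto (fun n => F (φ n) x) atTop (𝓝 (f x)) := by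
  choose K hK hFK using hK
  obtain ⟨D, hDc, hDd⟩ := TopologicalSpace.exists_countable_dense X
  have := hDc.to_subtype
  obtain ⟨_, _, φ, hφ, hφD⟩ := (isCompact_univ_pi fun d : D => hK d).tendsto_subseq
    (x := fun n (d : D) => F n d) fun n d _ => hFK d n
  have hcauchy (x : X) : CauchySeq fun n => F (φ n) x :=
    (hF.comp φ x).cauchySeq_of_mem_closure
      (fun y hy => (tendsto_pi_nhds.1 hφD ⟨y, hy⟩).cauchySeq) (hDd.closure_eq ▸ mem_univ x)
  choose f hf using fun x =>
    cauchySeq_tendsto_of_isComplete (hK x).isComplete (fun n => hFK x (φ n)) (hcauchy x)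
  exact ⟨φ, hφ, f, fun x => (hf x).2⟩

theorem equicontinuous_of_sq_sub_le {ι X : Type*} [TopologicalSpace X] {F : ι → X → ℝ}
    {g : X → ℝ} {C : ℝ} (hg : Continuous g) (h : ∀ i x y, (F i x - F i y) ^ 2 ≤ C * |g x - g y|) :
    Equicontinuous F := fun x₀ =>
  Metric.equicontinuousAt_of_continuity_modulus (fun x => √(C * |g x₀ - g x|))
    ((continuous_const.mul (continuous_const.sub hg).abs).sqrt.tendsto' x₀ 0 (by simp)) F
    (Eventually.of_forall fun x i => by
      rw [Real.dist_eq, ← sqrt_sq_eq_abs]; exact sqrt_le_sqrt (h i x₀ x))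

theorem ContinuousOn.continuousOn_intervalIntegral {f : ℝ → ℝ} {s : Set ℝ} {c : ℝ}
    (hf : ContinuousOn f s) (hs : IsOpen s) (hso : s.OrdConnected) (hc : c ∈ s) :
    ContinuousOn (fun x => ∫ t in c..x, f t) s := fun x hx =>
  (intervalIntegral.integral_hasDerivAt_right
    ((hf.mono (hso.uIcc_subset hc hx)).intervalIntegrable)
    (hf.stronglyMeasurableAtFilter hs x hx)
    (hf.continuousAt (hs.mem_nhds hx))).continuousAt.continuousWithinAt

theorem mul_sq_mul_add_mul_add_inv_nonneg {w h : ℝ} (hw : 0 < w) (t : ℝ) :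
    0 ≤ w * h ^ 2 * (t * t) + 2 * h * t + 1 / w := by
  have : 0 ≤ (t * w * h + 1) ^ 2 / w := by positivity
  convert this using 1
  field_simp
  ring

section WeightedCauchySchwarz

variable {α : Type*} [MeasurableSpace α] {μ : Measure α} {w h : α → ℝ}

theorem MeasureTheory.Integrable.of_mul_sq_of_inv (hh : AEStronglyMeasurable h μ)
    (hw : ∀ᵐ x ∂μ, 0 < w x)
    (hwh : Integrable (fun x => w x * h x ^ 2) μ) (hw' : Integrable (fun x => 1 / w x) μ) :
    Integrable h μ :=
  ((hwh.add hw').div_const 2).mono' hh <| hw.mono fun x hx => by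
    have h₁ := mul_sq_mul_add_mul_add_inv_nonneg (h := h x) hx 1
    have h₂ := mul_sq_mul_add_mul_add_inv_nonneg (h := h x) hx (-1)
    rw [Pi.add_apply, Real.norm_eq_abs, abs_le']
    constructor <;> linarith

theorem sq_integral_le_integral_mul_sq_mul_integral_inv (hw : ∀ᵐ x ∂μ, 0 < w x)
    (hwh : Integrable (fun x => w x * h x ^ 2) μ) (hh : Integrable h μ)
    (hw' : Integrable (fun x => 1 / w x) μ) :
    (∫ x, h x ∂μ) ^ 2 ≤ (∫ x, w x * h x ^ 2 ∂μ) * ∫ x, 1 / w x ∂μ := by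
  have hquad (t : ℝ) :
      0 ≤ (∫ x, w x * h x ^ 2 ∂μ) * (t * t) + 2 * (∫ x, h x ∂μ) * t + ∫ x, 1 / w x ∂μ := by
    calc 0 ≤ ∫ x, w x * h x ^ 2 * (t * t) + 2 * h x * t + 1 / w x ∂μ :=
          integral_nonneg_of_ae <| hw.mono fun x hx => mul_sq_mul_add_mul_add_inv_nonneg hx t
      _ = _ := by
          rw [integral_add _ hw', integral_add, integral_mul_const, integral_mul_const,
            integral_const_mul]
          exacts [hwh.mul_const _, (hh.const_mul 2).mul_const t,
            (hwh.mul_const _).add ((hh.const_mul 2).mul_const t)]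
  have := discrim_le_zero hquad
  rw [discrim] at this
  nlinarith

end WeightedCauchySchwarz

theorem sq_sub_le_intervalIntegral_mul_sq_mul_intervalIntegral_inv {a u u' : ℝ → ℝ} {x y : ℝ}
    (hxy : x ≤ y) (ha : ContinuousOn a (Icc x y)) (hapos : ∀ t ∈ Icc x y, 0 < a t)
    (hu : ∀ t ∈ Icc x y, HasDerivAt u (u' t) t)
    (hau : IntegrableOn (fun t => a t * u' t ^ 2) (Icc x y)) :
    (u y - u x) ^ 2 ≤ (∫ t in x..y, a t * u' t ^ 2) * ∫ t in x..y, 1 / a t := by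
  have hpos : ∀ᵐ t ∂volume.restrict (Ioc x y), 0 < a t :=
    (ae_restrict_mem measurableSet_Ioc).mono fun t ht => hapos t (Ioc_subset_Icc_self ht)
  have hinv : IntegrableOn (fun t => 1 / a t) (Ioc x y) :=
    ((continuousOn_const.div ha fun t ht => (hapos t ht).ne').integrableOn_Icc).mono_set
      Ioc_subset_Icc_self
  have hmeas : AEStronglyMeasurable u' (volume.restrict (Ioc x y)) :=
    (measurable_deriv u).aestronglyMeasurable.congr <|
      (ae_restrict_mem measurableSet_Ioc).mono fun t ht => (hu t (Ioc_subset_Icc_self ht)).deriv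
  have hu' : IntegrableOn u' (Ioc x y) :=
    Integrable.of_mul_sq_of_inv hmeas hpos (hau.mono_set Ioc_subset_Icc_self) hinv
  rw [← intervalIntegral.integral_eq_sub_of_hasDerivAt (fun t ht => hu t (uIcc_of_le hxy ▸ ht))
    ((intervalIntegrable_iff_integrableOn_Ioc_of_le hxy).2 hu'),
    intervalIntegral.integral_of_le hxy, intervalIntegral.integral_of_le hxy,
    intervalIntegral.integral_of_le hxy]
  exact sq_integral_le_integral_mul_sq_mul_integral_inv hpos
    (hau.mono_set Ioc_subset_Icc_self) hu' hinv

theorem sq_sub_le_setIntegral_mul_sq_mul_abs_sub_primitive_inv {a u u' : ℝ → ℝ} {s : Set ℝ}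
    (hs : s.OrdConnected) (ha : ContinuousOn a s) (hapos : ∀ t ∈ s, 0 < a t)
    (hu : ∀ t ∈ s, HasDerivAt u (u' t) t) (hau : IntegrableOn (fun t => a t * u' t ^ 2) s)
    {c x y : ℝ} (hc : c ∈ s) (hx : x ∈ s) (hy : y ∈ s) :
    (u x - u y) ^ 2 ≤
      (∫ t in s, a t * u' t ^ 2) * |(∫ t in c..x, 1 / a t) - ∫ t in c..y, 1 / a t| := by
  have hinv : ContinuousOn (fun t => 1 / a t) s :=
    continuousOn_const.div ha fun t ht => (hapos t ht).ne'
  rw [intervalIntegral.integral_interval_sub_left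
    (hinv.mono (hs.uIcc_subset hc hx)).intervalIntegrable
    (hinv.mono (hs.uIcc_subset hc hy)).intervalIntegrable]
  wlog hxy : x ≤ y generalizing x y
  · rw [← neg_sub, neg_sq, intervalIntegral.integral_symm, abs_neg]
    exact this hy hx (le_of_not_ge hxy)
  have hsub : Icc x y ⊆ s := hs.out hx hy
  have hinv_nonneg : 0 ≤ ∫ t in x..y, 1 / a t :=
    intervalIntegral.integral_nonneg hxy fun t ht => (one_div_pos.2 (hapos t (hsub ht))).le
  rw [← neg_sub, neg_sq, intervalIntegral.integral_symm, abs_neg, abs_of_nonneg hinv_nonneg]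
  refine (sq_sub_le_intervalIntegral_mul_sq_mul_intervalIntegral_inv hxy (ha.mono hsub)
    (fun t ht => hapos t (hsub ht)) (fun t ht => hu t (hsub ht)) (hau.mono_set hsub)).trans
    (mul_le_mul_of_nonneg_right ?_ hinv_nonneg)
  rw [intervalIntegral.integral_of_le hxy]
  exact setIntegral_mono_set hau (ae_restrict_of_forall_mem hs.measurableSet
    fun t ht => mul_nonneg (hapos t ht).le (sq_nonneg _))
    (Ioc_subset_Icc_self.trans hsub).eventuallyLE

theorem sq_le_of_sq_sub_le {f A : ℝ → ℝ} {s J : Set ℝ} {C B : ℝ} (hJs : J ⊆ s)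
    (hJ : volume J = 1) (hf : IntegrableOn (fun x => f x ^ 2) s) (hfC : ∫ x in s, f x ^ 2 ≤ C)
    (hB : ∀ y ∈ J, |A y| ≤ B) (hosc : ∀ x ∈ s, ∀ y ∈ s, (f x - f y) ^ 2 ≤ C * |A x - A y|)
    {x : ℝ} (hx : x ∈ s) :
    f x ^ 2 ≤ 2 * C * (1 + B + |A x|) := by
  obtain ⟨y, hyJ, hy⟩ := exists_le_setAverage (by simp [hJ]) (by simp [hJ]) (hf.mono_set hJs)
  rw [setAverage_eq, measureReal_def, hJ, ENNReal.toReal_one, inv_one, one_smul] at hy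
  have hyC : f y ^ 2 ≤ C :=
    hy.trans <| (setIntegral_mono_set hf (.of_forall fun x => sq_nonneg _)
      hJs.eventuallyLE).trans hfC
  have hC : 0 ≤ C := (sq_nonneg _).trans hyC
  have hA : |A x - A y| ≤ |A x| + B := (abs_sub _ _).trans (add_le_add_right (hB y hyJ) _)
  nlinarith [hosc x hx y (hJs hyJ), mul_le_mul_of_nonneg_left hA hC, sq_nonneg (f x - 2 * f y)]

theorem integrableOn_mul_sq_of_memLp_sqrt_mul {α : Type*} [MeasurableSpace α] {μ : Measure α}
    {a g : α → ℝ} {s : Set α} (hs : MeasurableSet s) (ha : ∀ x ∈ s, 0 ≤ a x)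
    (h : MemLp (fun x => √(a x) * g x) 2 (μ.restrict s)) :
    IntegrableOn (fun x => a x * g x ^ 2) s μ :=
  ((memLp_two_iff_integrable_sq h.1).1 h).congr <| (ae_restrict_mem hs).mono fun x hx => by
    simp only [mul_pow, sq_sqrt (ha x hx)]

theorem memLp_two_and_tendsto_integral_sq_sub_of_dominated {α : Type*} [MeasurableSpace α]
    {μ : Measure α} {g : ℕ → α → ℝ} {v G : α → ℝ}
    (hg : ∀ n, AEStronglyMeasurable (g n) μ) (hG : Integrable G μ)
    (hgG : ∀ n, ∀ᵐ x ∂μ, g n x ^ 2 ≤ G x)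
    (hgv : ∀ᵐ x ∂μ, Tendsto (fun n => g n x) atTop (𝓝 (v x))) :
    MemLp v 2 μ ∧ Tendsto (fun n => ∫ x, (g n x - v x) ^ 2 ∂μ) atTop (𝓝 0) := by
  have hv : AEStronglyMeasurable v μ := aestronglyMeasurable_of_tendsto_ae atTop hg hgv
  have hvG : ∀ᵐ x ∂μ, v x ^ 2 ≤ G x := by
    filter_upwards [hgv, ae_all_iff.2 hgG] with x hx hxG
    exact le_of_tendsto' (hx.pow 2) hxG
  refine ⟨(memLp_two_iff_integrable_sq hv).2 (hG.mono' (hv.pow 2) ?_), ?_⟩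
  · filter_upwards [hvG] with x hx
    rwa [Real.norm_eq_abs, abs_of_nonneg (sq_nonneg _)]
  · simpa using tendsto_integral_of_dominated_convergence (f := 0) (fun x => 4 * G x)
      (fun n => ((hg n).sub hv).pow 2) (hG.const_mul 4)
      (fun n => by
        filter_upwards [hgG n, hvG] with x hgx hvx
        rw [Pi.pow_apply, Pi.sub_apply, Real.norm_eq_abs, abs_of_nonneg (sq_nonneg _)]
        nlinarith [sq_nonneg (g n x + v x)])
      (by
        filter_upwards [hgv] with x hx
        simpa using (hx.sub_const (v x)).pow 2)

theorem compact_embedding_weighted_sobolev_general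
    (a : ℝ → ℝ) (ha : ContDiffOn ℝ 1 a (Icc (-1) 1))
    (hapos : ∀ x ∈ Ioo (-1:ℝ) 1, 0 < a x)
    (hAint : IntegrableOn (fun x => ∫ s in (0:ℝ)..x, 1 / a s) (Ioo (-1) 1))
    (R : ℝ)
    (u u' : ℕ → ℝ → ℝ)
    (hu : ∀ n, ∀ x ∈ Ioo (-1:ℝ) 1, HasDerivAt (u n) (u' n x) x)
    (huL2 : ∀ n, MemLp (u n) 2 (volume.restrict (Ioo (-1) 1)))
    (huL2' : ∀ n, MemLp (fun x => Real.sqrt (a x) * u' n x) 2 (volume.restrict (Ioo (-1) 1)))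
    (hbdd : ∀ n, (∫ x in Ioo (-1:ℝ) 1, u n x ^ 2) +
                 (∫ x in Ioo (-1:ℝ) 1, a x * u' n x ^ 2) ≤ R ^ 2) :
    ∃ φ : ℕ → ℕ, StrictMono φ ∧ ∃ v : ℝ → ℝ,
      MemLp v 2 (volume.restrict (Ioo (-1) 1)) ∧
      Tendsto (fun n => ∫ x in Ioo (-1:ℝ) 1, (u (φ n) x - v x) ^ 2) atTop (nhds 0) := by
  set I := Ioo (-1:ℝ) 1
  set A : ℝ → ℝ := fun x => ∫ s in (0:ℝ)..x, 1 / a s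
  have h0 : (0:ℝ) ∈ I := ⟨by norm_num, by norm_num⟩
  have hac : ContinuousOn a I := ha.continuousOn.mono Ioo_subset_Icc_self
  have hAc : ContinuousOn A I := (continuousOn_const.div hac fun x hx => (hapos x hx).ne')
    |>.continuousOn_intervalIntegral isOpen_Ioo ordConnected_Ioo h0
  have hau_int (n : ℕ) : IntegrableOn (fun x => a x * u' n x ^ 2) I :=
    integrableOn_mul_sq_of_memLp_sqrt_mul measurableSet_Ioo (fun x hx => (hapos x hx).le) (huL2' n)
  have hu_le (n : ℕ) : ∫ x in I, u n x ^ 2 ≤ R ^ 2 :=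
    le_of_add_le_of_nonneg_left (hbdd n) <| setIntegral_nonneg measurableSet_Ioo
      fun x hx => mul_nonneg (hapos x hx).le (sq_nonneg _)
  have hau_le (n : ℕ) : ∫ x in I, a x * u' n x ^ 2 ≤ R ^ 2 :=
    le_of_add_le_of_nonneg_right (hbdd n) (integral_nonneg fun x => sq_nonneg (u n x))
  have hosc (n : ℕ) (x : ℝ) (hx : x ∈ I) (y : ℝ) (hy : y ∈ I) :
      (u n x - u n y) ^ 2 ≤ R ^ 2 * |A x - A y| :=
    (sq_sub_le_setIntegral_mul_sq_mul_abs_sub_primitive_inv ordConnected_Ioo hac hapos (hu n)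
      (hau_int n) h0 hx hy).trans (mul_le_mul_of_nonneg_right (hau_le n) (abs_nonneg _))
  have hJ : Icc (-2⁻¹) 2⁻¹ ⊆ I := Icc_subset_Ioo (by norm_num) (by norm_num)
  obtain ⟨B, hB⟩ := isCompact_Icc.exists_bound_of_continuousOn (hAc.mono hJ)
  set G : ℝ → ℝ := fun x => 2 * R ^ 2 * (1 + B + |A x|)
  have hG : IntegrableOn G I :=
    ((integrableOn_const measure_Ioo_lt_top.ne).add hAint.abs).const_mul _
  have hdom (n : ℕ) (x : ℝ) (hx : x ∈ I) : u n x ^ 2 ≤ G x :=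
    sq_le_of_sq_sub_le hJ (by norm_num) ((memLp_two_iff_integrable_sq (huL2 n).1).1 (huL2 n))
      (hu_le n) hB (hosc n) hx
  obtain ⟨φ, hφ, f, hf⟩ := (equicontinuous_of_sq_sub_le (F := fun n (x : I) => u n x)
    hAc.domRestrict fun n x y => hosc n x x.2 y y.2).exists_subseq_tendsto fun x =>
      ⟨_, isCompact_closedBall 0 _, fun n => mem_closedBall_zero_iff.2 (abs_le_sqrt (hdom n x x.2))⟩
  refine ⟨φ, hφ, _, memLp_two_and_tendsto_integral_sq_sub_of_dominated
    (v := fun x => if hx : x ∈ I then f ⟨x, hx⟩ else 0) (fun n => (huL2 (φ n)).1) hG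
    (fun n => (ae_restrict_mem measurableSet_Ioo).mono fun x hx => hdom (φ n) x hx) ?_⟩
  filter_upwards [ae_restrict_mem measurableSet_Ioo] with x hx
  simpa [hx] using hf ⟨x, hx⟩

/-- Compactness of the embedding H¹_a(-1,1) ↪ L²(-1,1): every bounded sequence in the
    weighted Sobolev space has a subsequence converging strongly in L²(-1,1). -/
theorem compact_embedding_weighted_sobolev
    (a : ℝ → ℝ) (ha : ContDiffOn ℝ 1 a (Icc (-1) 1))
    (hapos : ∀ x ∈ Ioo (-1:ℝ) 1, 0 < a x)
    (ha1 : a (-1) = 0) (ha2 : a 1 = 0)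
    (hAint : IntegrableOn (fun x => ∫ s in (0:ℝ)..x, 1 / a s) (Ioo (-1) 1))
    (R : ℝ) (hR : 0 < R)
    (u u' : ℕ → ℝ → ℝ)
    (hu : ∀ n, ∀ x ∈ Ioo (-1:ℝ) 1, HasDerivAt (u n) (u' n x) x)
    (huL2 : ∀ n, MemLp (u n) 2 (volume.restrict (Ioo (-1) 1)))
    (huL2' : ∀ n, MemLp (fun x => Real.sqrt (a x) * u' n x) 2 (volume.restrict (Ioo (-1) 1)))
    (hbdd : ∀ n, (∫ x in Ioo (-1:ℝ) 1, u n x ^ 2) +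
                 (∫ x in Ioo (-1:ℝ) 1, a x * u' n x ^ 2) ≤ R ^ 2) :
    ∃ φ : ℕ → ℕ, StrictMono φ ∧ ∃ v : ℝ → ℝ,
      MemLp v 2 (volume.restrict (Ioo (-1) 1)) ∧
      Tendsto (fun n => ∫ x in Ioo (-1:ℝ) 1, (u (φ n) x - v x) ^ 2) atTop (nhds 0) :=
  compact_embedding_weighted_sobolev_general a ha hapos hAint R u u' hu huL2 huL2' hbdd
end

section
/- Let a ∈ C¹([-1,1]) be positive on (-1,1) with a(±1) = 0 and A = ∫₀^· ds/a ∈ L¹(-1,1). Let v ∈ C^∞([-1,1]) with v > 0 on [-1,1], and set α_*(x) = −(a(x)v'(x))'/v(x). Then for every u ∈ H¹_a(-1,1), ∫_{-1}^1 α_*(x) u(x)² dx ≤ ∫_{-1}^1 a(x) u'(x)² dx. -/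
open MeasureTheory Set Real Filter Topology

lemma bdd_Ioo {f : ℝ → ℝ} (hf : ContinuousOn f (Icc (-1:ℝ) 1)) :
    ∃ C, 0 < C ∧ ∀ x ∈ Icc (-1:ℝ) 1, |f x| ≤ C := by
  obtain ⟨C, hC⟩ := isCompact_Icc.exists_bound_of_continuousOn hf
  refine ⟨max C 1, lt_of_lt_of_le one_pos (le_max_right _ _), fun x hx => ?_⟩
  simpa [Real.norm_eq_abs] using (hC x hx).trans (le_max_left _ _)

lemma l2mul {μ : Measure ℝ} {f g : ℝ → ℝ} (hf : MemLp f 2 μ) (hg : MemLp g 2 μ) :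
    Integrable (fun x => f x * g x) μ := by
  refine (hf.integrable_sq.add hg.integrable_sq).mono' (hf.1.mul hg.1) ?_
  refine Eventually.of_forall fun x => ?_
  simp only [Pi.add_apply, Real.norm_eq_abs, abs_mul]
  nlinarith [abs_nonneg (f x), abs_nonneg (g x), sq_abs (f x), sq_abs (g x),
    sq_nonneg (|f x| - |g x|)]

lemma auxR {f f' : ℝ → ℝ} (hd : ∀ x ∈ Ico (0:ℝ) 1, HasDerivAt f (f' x) x)
    (hi : IntegrableOn f' (Ioo (0:ℝ) 1)) :
    Tendsto f (𝓝[<] (1:ℝ)) (𝓝 (f 0 + ∫ t in (0:ℝ)..1, f' t)) := by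
  have hIcc : IntegrableOn f' (Icc (0:ℝ) 1) :=
    hi.congr_set_ae (Ioo_ae_eq_Icc).symm
  have hprim : ContinuousOn (fun y => ∫ t in (0:ℝ)..y, f' t) (Icc (0:ℝ) 1) := by
    have := intervalIntegral.continuousOn_primitive_interval
      (a := (0:ℝ)) (b := 1) (μ := volume) (f := f') (by rwa [uIcc_of_le zero_le_one])
    rwa [uIcc_of_le zero_le_one] at this
  have h1 : Tendsto (fun y => ∫ t in (0:ℝ)..y, f' t) (𝓝[<] (1:ℝ))
      (𝓝 (∫ t in (0:ℝ)..1, f' t)) := by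
    have h2 := hprim 1 (right_mem_Icc.2 zero_le_one)
    refine h2.mono_left ?_
    rw [← nhdsWithin_Ico_eq_nhdsLT (zero_lt_one (α := ℝ))]
    exact nhdsWithin_mono _ Ico_subset_Icc_self
  have heq : ∀ᶠ y in 𝓝[<] (1:ℝ), f 0 + ∫ t in (0:ℝ)..y, f' t = f y := by
    filter_upwards [Ioo_mem_nhdsLT_of_mem (show (1:ℝ) ∈ Ioc 0 1 by norm_num)] with y hy
    have hsub : uIcc (0:ℝ) y ⊆ Ico (0:ℝ) 1 := by
      rw [uIcc_of_le hy.1.le]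
      exact fun t ht => ⟨ht.1, lt_of_le_of_lt ht.2 hy.2⟩
    have := intervalIntegral.integral_eq_sub_of_hasDerivAt
      (fun t ht => hd t (hsub ht))
      ((hIcc.mono_set (hsub.trans Ico_subset_Icc_self)).intervalIntegrable)
    rw [this]; ring
  exact Tendsto.congr' heq (tendsto_const_nhds.add h1)

lemma auxL {f f' : ℝ → ℝ} (hd : ∀ x ∈ Ioc (-1:ℝ) 0, HasDerivAt f (f' x) x)
    (hi : IntegrableOn f' (Ioo (-1:ℝ) 0)) :
    Tendsto f (𝓝[>] (-1:ℝ)) (𝓝 (f 0 - ∫ t in (-1:ℝ)..0, f' t)) := by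
  have hIcc : IntegrableOn f' (Icc (-1:ℝ) 0) :=
    hi.congr_set_ae (Ioo_ae_eq_Icc).symm
  have hprim : ContinuousOn (fun y => ∫ t in y..(0:ℝ), f' t) (Icc (-1:ℝ) 0) := by
    have := intervalIntegral.continuousOn_primitive_interval_left
      (a := (-1:ℝ)) (b := 0) (μ := volume) (f := f')
      (by rwa [uIcc_of_le (by norm_num : (-1:ℝ) ≤ 0)])
    rwa [uIcc_of_le (by norm_num : (-1:ℝ) ≤ 0)] at this
  have h1 : Tendsto (fun y => ∫ t in y..(0:ℝ), f' t) (𝓝[>] (-1:ℝ))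
      (𝓝 (∫ t in (-1:ℝ)..0, f' t)) := by
    have h2 := hprim (-1) (left_mem_Icc.2 (by norm_num))
    refine h2.mono_left ?_
    rw [← nhdsWithin_Ioc_eq_nhdsGT (show (-1:ℝ) < 0 by norm_num)]
    exact nhdsWithin_mono _ Ioc_subset_Icc_self
  have heq : ∀ᶠ y in 𝓝[>] (-1:ℝ), f 0 - ∫ t in y..(0:ℝ), f' t = f y := by
    filter_upwards [Ioo_mem_nhdsGT_of_mem (show (-1:ℝ) ∈ Ico (-1) 0 by norm_num)] with y hy
    have hsub : uIcc y (0:ℝ) ⊆ Ioc (-1:ℝ) 0 := by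
      rw [uIcc_of_le hy.2.le]
      exact fun t ht => ⟨lt_of_lt_of_le hy.1 ht.1, ht.2⟩
    have := intervalIntegral.integral_eq_sub_of_hasDerivAt
      (fun t ht => hd t (hsub ht))
      ((hIcc.mono_set (hsub.trans Ioc_subset_Icc_self)).intervalIntegrable)
    rw [this]; ring
  exact Tendsto.congr' heq (tendsto_const_nhds.sub h1)

lemma g_tendsto_right (a u u' D : ℝ → ℝ)
    (hca : ContinuousOn a (Icc (-1:ℝ) 1)) (ha2 : a 1 = 0)
    (hapos : ∀ x ∈ Ioo (-1:ℝ) 1, 0 < a x)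
    (hu : ∀ x ∈ Ioo (-1:ℝ) 1, HasDerivAt u (u' x) x)
    (hu2 : IntegrableOn (fun x => u x ^ 2) (Ioo (-1:ℝ) 1))
    (hw : MemLp (fun x => Real.sqrt (a x) * u' x) 2 (volume.restrict (Ioo (-1:ℝ) 1)))
    (hgD : ∀ x ∈ Ico (0:ℝ) 1, HasDerivAt (fun y => a y * u y ^ 2) (D x) x)
    (hD : IntegrableOn D (Ioo (-1:ℝ) 1)) :
    Tendsto (fun y => a y * u y ^ 2) (𝓝[<] (1:ℝ)) (𝓝 0) := by
  have hsub01 : Ioo (0:ℝ) 1 ⊆ Ioo (-1:ℝ) 1 := fun t ht => ⟨by linarith [ht.1], ht.2⟩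
  have htg : Tendsto (fun y => a y * u y ^ 2) (𝓝[<] (1:ℝ))
      (𝓝 (a 0 * u 0 ^ 2 + ∫ t in (0:ℝ)..1, D t)) := auxR hgD (hD.mono_set hsub01)
  suffices hℓ : a 0 * u 0 ^ 2 + (∫ t in (0:ℝ)..1, D t) = 0 by rwa [hℓ] at htg
  by_cases hcase : IntegrableOn (fun t => (a t)⁻¹) (Ioo (0:ℝ) 1)
  · have hmeas : AEStronglyMeasurable (fun t => (Real.sqrt (a t))⁻¹)
        (volume.restrict (Ioo (0:ℝ) 1)) := by
      refine ContinuousOn.aestronglyMeasurable ?_ measurableSet_Ioo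
      exact (Real.continuous_sqrt.comp_continuousOn
        (hca.mono (hsub01.trans Ioo_subset_Icc_self))).inv₀
        (fun x hx => ne_of_gt (Real.sqrt_pos.2 (hapos x (hsub01 hx))))
    have h1sa : MemLp (fun t => (Real.sqrt (a t))⁻¹) 2 (volume.restrict (Ioo (0:ℝ) 1)) := by
      rw [memLp_two_iff_integrable_sq hmeas]
      refine hcase.congr ?_
      filter_upwards [ae_restrict_mem measurableSet_Ioo] with x hx
      rw [← Real.sqrt_inv, Real.sq_sqrt (inv_nonneg.2 (hapos x (hsub01 hx)).le)]
    have hw01 : MemLp (fun x => Real.sqrt (a x) * u' x) 2 (volume.restrict (Ioo (0:ℝ) 1)) :=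
      hw.mono_measure (Measure.restrict_mono hsub01 le_rfl)
    have hu'int : IntegrableOn u' (Ioo (0:ℝ) 1) := by
      refine (l2mul hw01 h1sa).congr ?_
      filter_upwards [ae_restrict_mem measurableSet_Ioo] with x hx
      have h0 : Real.sqrt (a x) ≠ 0 := ne_of_gt (Real.sqrt_pos.2 (hapos x (hsub01 hx)))
      field_simp
    have hulim := auxR (f := u) (f' := u')
      (fun x hx => hu x ⟨by linarith [hx.1], hx.2⟩) hu'int
    have hatend : Tendsto a (𝓝[<] (1:ℝ)) (𝓝 0) := by
      have h := hca 1 (right_mem_Icc.2 (by norm_num))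
      rw [ContinuousWithinAt, ha2] at h
      refine h.mono_left ?_
      rw [← nhdsWithin_Ico_eq_nhdsLT (show (-1:ℝ) < 1 by norm_num)]
      exact nhdsWithin_mono _ Ico_subset_Icc_self
    have hfin : Tendsto (fun y => a y * u y ^ 2) (𝓝[<] (1:ℝ))
        (𝓝 (0 * (u 0 + ∫ t in (0:ℝ)..1, u' t) ^ 2)) := hatend.mul (hulim.pow 2)
    rw [zero_mul] at hfin
    exact tendsto_nhds_unique htg hfin
  · by_contra hne
    have hge : 0 ≤ a 0 * u 0 ^ 2 + ∫ t in (0:ℝ)..1, D t := by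
      refine ge_of_tendsto htg ?_
      filter_upwards [Ioo_mem_nhdsLT_of_mem (show (1:ℝ) ∈ Ioc 0 1 by norm_num)] with y hy
      exact mul_nonneg (hapos y (hsub01 hy)).le (sq_nonneg _)
    have hpos : 0 < a 0 * u 0 ^ 2 + ∫ t in (0:ℝ)..1, D t := lt_of_le_of_ne hge (Ne.symm hne)
    set ℓ := a 0 * u 0 ^ 2 + ∫ t in (0:ℝ)..1, D t with hℓdef
    have hev : ∀ᶠ y in 𝓝[<] (1:ℝ), ℓ/2 ≤ a y * u y ^ 2 ∧ y ∈ Ioo (0:ℝ) 1 :=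
      (htg.eventually (eventually_ge_nhds (by linarith : ℓ/2 < ℓ))).and
        (Ioo_mem_nhdsLT_of_mem (show (1:ℝ) ∈ Ioc 0 1 by norm_num))
    obtain ⟨c, hc1, hsubc⟩ := mem_nhdsLT_iff_exists_Ioo_subset.1 hev
    have hc0 : (0:ℝ) ≤ max c 0 := le_max_right _ _
    have hc'1 : max c 0 < 1 := max_lt hc1 one_pos
    have hsubIoo : Ioo (max c 0) 1 ⊆ Ioo (-1:ℝ) 1 :=
      fun t ht => ⟨by linarith [ht.1], ht.2⟩
    have hsubc' : ∀ y ∈ Ioo (max c 0) 1, ℓ/2 ≤ a y * u y ^ 2 ∧ y ∈ Ioo (0:ℝ) 1 :=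
      fun y hy => hsubc ⟨lt_of_le_of_lt (le_max_left _ _) hy.1, hy.2⟩
    have hint1 : IntegrableOn (fun t => (a t)⁻¹) (Ioo (max c 0) 1) := by
      have hb : IntegrableOn (fun y => (2/ℓ) * u y ^ 2) (Ioo (max c 0) 1) :=
        (hu2.mono_set hsubIoo).const_mul _
      have hmeasinv : AEStronglyMeasurable (fun t => (a t)⁻¹)
          (volume.restrict (Ioo (max c 0) 1)) := by
        refine ContinuousOn.aestronglyMeasurable ?_ measurableSet_Ioo
        exact (hca.mono (hsubIoo.trans Ioo_subset_Icc_self)).inv₀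
          (fun x hx => ne_of_gt (hapos x (hsubIoo hx)))
      refine Integrable.mono' hb hmeasinv ?_
      filter_upwards [ae_restrict_mem measurableSet_Ioo] with y hy
      obtain ⟨hg2, hy01⟩ := hsubc' y hy
      have hay := hapos y (hsubIoo hy)
      rw [Real.norm_eq_abs, abs_of_pos (inv_pos.2 hay)]
      have key : (a y)⁻¹ * (ℓ/2) ≤ (a y)⁻¹ * (a y * u y ^ 2) :=
        mul_le_mul_of_nonneg_left hg2 (inv_nonneg.2 hay.le)
      rw [← mul_assoc, inv_mul_cancel₀ (ne_of_gt hay), one_mul] at key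
      calc (a y)⁻¹ = (2/ℓ) * ((a y)⁻¹ * (ℓ/2)) := by field_simp
        _ ≤ 2/ℓ * u y ^ 2 := mul_le_mul_of_nonneg_left key (by positivity)
    refine hcase ?_
    have hcont : IntegrableOn (fun t => (a t)⁻¹) (Icc (0:ℝ) (max c 0)) := by
      refine ContinuousOn.integrableOn_Icc ?_
      refine (hca.mono (fun t ht => ⟨by linarith [ht.1], by linarith [ht.2]⟩)).inv₀
        (fun x hx => ne_of_gt (hapos x ⟨by linarith [hx.1], by linarith [hx.2]⟩))
    refine ((hcont.mono_set Ioc_subset_Icc_self).union hint1).mono_set ?_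
    intro t ht
    rcases le_or_gt t (max c 0) with h | h
    · exact Or.inl ⟨ht.1, h⟩
    · exact Or.inr ⟨h, ht.2⟩

lemma g_tendsto_left (a u u' D : ℝ → ℝ)
    (hca : ContinuousOn a (Icc (-1:ℝ) 1)) (ha1 : a (-1) = 0)
    (hapos : ∀ x ∈ Ioo (-1:ℝ) 1, 0 < a x)
    (hu : ∀ x ∈ Ioo (-1:ℝ) 1, HasDerivAt u (u' x) x)
    (hu2 : IntegrableOn (fun x => u x ^ 2) (Ioo (-1:ℝ) 1))
    (hw : MemLp (fun x => Real.sqrt (a x) * u' x) 2 (volume.restrict (Ioo (-1:ℝ) 1)))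
    (hgD : ∀ x ∈ Ioc (-1:ℝ) 0, HasDerivAt (fun y => a y * u y ^ 2) (D x) x)
    (hD : IntegrableOn D (Ioo (-1:ℝ) 1)) :
    Tendsto (fun y => a y * u y ^ 2) (𝓝[>] (-1:ℝ)) (𝓝 0) := by
  have hsub01 : Ioo (-1:ℝ) 0 ⊆ Ioo (-1:ℝ) 1 := fun t ht => ⟨ht.1, by linarith [ht.2]⟩
  have htg : Tendsto (fun y => a y * u y ^ 2) (𝓝[>] (-1:ℝ))
      (𝓝 (a 0 * u 0 ^ 2 - ∫ t in (-1:ℝ)..0, D t)) := auxL hgD (hD.mono_set hsub01)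
  suffices hℓ : a 0 * u 0 ^ 2 - (∫ t in (-1:ℝ)..0, D t) = 0 by rwa [hℓ] at htg
  by_cases hcase : IntegrableOn (fun t => (a t)⁻¹) (Ioo (-1:ℝ) 0)
  · have hmeas : AEStronglyMeasurable (fun t => (Real.sqrt (a t))⁻¹)
        (volume.restrict (Ioo (-1:ℝ) 0)) := by
      refine ContinuousOn.aestronglyMeasurable ?_ measurableSet_Ioo
      exact (Real.continuous_sqrt.comp_continuousOn
        (hca.mono (hsub01.trans Ioo_subset_Icc_self))).inv₀
        (fun x hx => ne_of_gt (Real.sqrt_pos.2 (hapos x (hsub01 hx))))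
    have h1sa : MemLp (fun t => (Real.sqrt (a t))⁻¹) 2 (volume.restrict (Ioo (-1:ℝ) 0)) := by
      rw [memLp_two_iff_integrable_sq hmeas]
      refine hcase.congr ?_
      filter_upwards [ae_restrict_mem measurableSet_Ioo] with x hx
      rw [← Real.sqrt_inv, Real.sq_sqrt (inv_nonneg.2 (hapos x (hsub01 hx)).le)]
    have hw01 : MemLp (fun x => Real.sqrt (a x) * u' x) 2 (volume.restrict (Ioo (-1:ℝ) 0)) :=
      hw.mono_measure (Measure.restrict_mono hsub01 le_rfl)
    have hu'int : IntegrableOn u' (Ioo (-1:ℝ) 0) := by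
      refine (l2mul hw01 h1sa).congr ?_
      filter_upwards [ae_restrict_mem measurableSet_Ioo] with x hx
      have h0 : Real.sqrt (a x) ≠ 0 := ne_of_gt (Real.sqrt_pos.2 (hapos x (hsub01 hx)))
      field_simp
    have hulim := auxL (f := u) (f' := u')
      (fun x hx => hu x ⟨hx.1, by linarith [hx.2]⟩) hu'int
    have hatend : Tendsto a (𝓝[>] (-1:ℝ)) (𝓝 0) := by
      have h := hca (-1) (left_mem_Icc.2 (by norm_num))
      rw [ContinuousWithinAt, ha1] at h
      refine h.mono_left ?_
      rw [← nhdsWithin_Ioc_eq_nhdsGT (show (-1:ℝ) < 1 by norm_num)]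
      exact nhdsWithin_mono _ Ioc_subset_Icc_self
    have hfin : Tendsto (fun y => a y * u y ^ 2) (𝓝[>] (-1:ℝ))
        (𝓝 (0 * (u 0 - ∫ t in (-1:ℝ)..0, u' t) ^ 2)) := hatend.mul (hulim.pow 2)
    rw [zero_mul] at hfin
    exact tendsto_nhds_unique htg hfin
  · by_contra hne
    have hge : 0 ≤ a 0 * u 0 ^ 2 - ∫ t in (-1:ℝ)..0, D t := by
      refine ge_of_tendsto htg ?_
      filter_upwards [Ioo_mem_nhdsGT_of_mem (show (-1:ℝ) ∈ Ico (-1) 0 by norm_num)] with y hy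
      exact mul_nonneg (hapos y (hsub01 hy)).le (sq_nonneg _)
    have hpos : 0 < a 0 * u 0 ^ 2 - ∫ t in (-1:ℝ)..0, D t := lt_of_le_of_ne hge (Ne.symm hne)
    set ℓ := a 0 * u 0 ^ 2 - ∫ t in (-1:ℝ)..0, D t with hℓdef
    have hev : ∀ᶠ y in 𝓝[>] (-1:ℝ), ℓ/2 ≤ a y * u y ^ 2 ∧ y ∈ Ioo (-1:ℝ) 0 :=
      (htg.eventually (eventually_ge_nhds (by linarith : ℓ/2 < ℓ))).and
        (Ioo_mem_nhdsGT_of_mem (show (-1:ℝ) ∈ Ico (-1) 0 by norm_num))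
    obtain ⟨c, hc1, hsubc⟩ := mem_nhdsGT_iff_exists_Ioo_subset.1 hev
    have hc0 : min c 0 ≤ (0:ℝ) := min_le_right _ _
    have hc'1 : (-1:ℝ) < min c 0 := lt_min hc1 (by norm_num)
    have hsubIoo : Ioo (-1:ℝ) (min c 0) ⊆ Ioo (-1:ℝ) 1 :=
      fun t ht => ⟨ht.1, by linarith [ht.2]⟩
    have hsubc' : ∀ y ∈ Ioo (-1:ℝ) (min c 0), ℓ/2 ≤ a y * u y ^ 2 ∧ y ∈ Ioo (-1:ℝ) 0 :=
      fun y hy => hsubc ⟨hy.1, lt_of_lt_of_le hy.2 (min_le_left _ _)⟩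
    have hint1 : IntegrableOn (fun t => (a t)⁻¹) (Ioo (-1:ℝ) (min c 0)) := by
      have hb : IntegrableOn (fun y => (2/ℓ) * u y ^ 2) (Ioo (-1:ℝ) (min c 0)) :=
        (hu2.mono_set hsubIoo).const_mul _
      have hmeasinv : AEStronglyMeasurable (fun t => (a t)⁻¹)
          (volume.restrict (Ioo (-1:ℝ) (min c 0))) := by
        refine ContinuousOn.aestronglyMeasurable ?_ measurableSet_Ioo
        exact (hca.mono (hsubIoo.trans Ioo_subset_Icc_self)).inv₀
          (fun x hx => ne_of_gt (hapos x (hsubIoo hx)))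
      refine Integrable.mono' hb hmeasinv ?_
      filter_upwards [ae_restrict_mem measurableSet_Ioo] with y hy
      obtain ⟨hg2, hy01⟩ := hsubc' y hy
      have hay := hapos y (hsubIoo hy)
      rw [Real.norm_eq_abs, abs_of_pos (inv_pos.2 hay)]
      have key : (a y)⁻¹ * (ℓ/2) ≤ (a y)⁻¹ * (a y * u y ^ 2) :=
        mul_le_mul_of_nonneg_left hg2 (inv_nonneg.2 hay.le)
      rw [← mul_assoc, inv_mul_cancel₀ (ne_of_gt hay), one_mul] at key
      calc (a y)⁻¹ = (2/ℓ) * ((a y)⁻¹ * (ℓ/2)) := by field_simp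
        _ ≤ 2/ℓ * u y ^ 2 := mul_le_mul_of_nonneg_left key (by positivity)
    refine hcase ?_
    have hcont : IntegrableOn (fun t => (a t)⁻¹) (Icc (min c 0) 0) := by
      refine ContinuousOn.integrableOn_Icc ?_
      refine (hca.mono (fun t ht => ⟨by linarith [ht.1], by linarith [ht.2]⟩)).inv₀
        (fun x hx => ne_of_gt (hapos x ⟨by linarith [hx.1], by linarith [hx.2]⟩))
    refine (hint1.union (hcont.mono_set Ico_subset_Icc_self)).mono_set ?_
    intro t ht
    rcases lt_or_ge t (min c 0) with h | h
    · exact Or.inl ⟨ht.1, h⟩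
    · exact Or.inr ⟨h, ht.2⟩

/-- Quadratic form inequality: for α_* = −(a v_x)_x/v with v smooth and positive,
    ∫ α_* u² ≤ ∫ a u_x² for every u ∈ H¹_a(-1,1). -/
theorem quadratic_form_inequality
    (a : ℝ → ℝ) (ha : ContDiffOn ℝ 1 a (Icc (-1) 1))
    (hapos : ∀ x ∈ Ioo (-1:ℝ) 1, 0 < a x)
    (ha1 : a (-1) = 0) (ha2 : a 1 = 0)
    (hAint : IntegrableOn (fun x => ∫ s in (0:ℝ)..x, 1 / a s) (Ioo (-1) 1))
    (v : ℝ → ℝ) (hv : ContDiffOn ℝ (⊤ : ℕ∞) v (Icc (-1) 1))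
    (hvpos : ∀ x ∈ Icc (-1:ℝ) 1, 0 < v x)
    (αs : ℝ → ℝ)
    (hαs : ∀ x ∈ Ioo (-1:ℝ) 1,
      αs x = -(deriv (fun y => a y * deriv v y) x) / v x)
    (u u' : ℝ → ℝ)
    (hu : ∀ x ∈ Ioo (-1:ℝ) 1, HasDerivAt u (u' x) x)
    (huL2 : MemLp u 2 (volume.restrict (Ioo (-1) 1)))
    (huL2' : MemLp (fun x => Real.sqrt (a x) * u' x) 2 (volume.restrict (Ioo (-1) 1))) :
    ∫ x in Ioo (-1:ℝ) 1, αs x * u x ^ 2 ≤ ∫ x in Ioo (-1:ℝ) 1, a x * u' x ^ 2 := by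
  have hsubI : Ioo (-1:ℝ) 1 ⊆ Icc (-1:ℝ) 1 := Ioo_subset_Icc_self
  have huD : UniqueDiffOn ℝ (Icc (-1:ℝ) 1) := uniqueDiffOn_Icc (by norm_num)
  have hmem : ∀ x ∈ Ioo (-1:ℝ) 1, Icc (-1:ℝ) 1 ∈ 𝓝 x := fun x hx => Icc_mem_nhds hx.1 hx.2
  have hax : ∀ x ∈ Ioo (-1:ℝ) 1, HasDerivAt a (deriv a x) x := fun x hx =>
    ((ha.differentiableOn one_ne_zero).differentiableAt (hmem x hx)).hasDerivAt
  have hvx : ∀ x ∈ Ioo (-1:ℝ) 1, HasDerivAt v (deriv v x) x := fun x hx =>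
    ((hv.differentiableOn (by simp)).differentiableAt (hmem x hx)).hasDerivAt
  set W := derivWithin v (Icc (-1:ℝ) 1) with hWdef
  have hWcd : ContDiffOn ℝ (⊤ : ℕ∞) W (Icc (-1:ℝ) 1) := hv.derivWithin huD (by simp)
  have hVW : EqOn (deriv v) W (Ioo (-1:ℝ) 1) := fun x hx =>
    (derivWithin_of_mem_nhds (hmem x hx)).symm
  have hVev : ∀ x ∈ Ioo (-1:ℝ) 1, deriv v =ᶠ[𝓝 x] W := fun x hx =>
    eventually_of_mem (isOpen_Ioo.mem_nhds hx) hVW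
  have hV'eq : ∀ x ∈ Ioo (-1:ℝ) 1, deriv (deriv v) x = derivWithin W (Icc (-1:ℝ) 1) x := by
    intro x hx
    rw [(hVev x hx).deriv_eq, ← derivWithin_of_mem_nhds (hmem x hx)]
  have hV'x : ∀ x ∈ Ioo (-1:ℝ) 1, HasDerivAt (deriv v) (deriv (deriv v) x) x := by
    intro x hx
    have hW : HasDerivAt W (deriv W x) x :=
      ((hWcd.differentiableOn (by simp)).differentiableAt (hmem x hx)).hasDerivAt
    have h2 := hW.congr_of_eventuallyEq (hVev x hx)
    rwa [← (hVev x hx).deriv_eq] at h2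
  obtain ⟨Ca, hCa0, hCa⟩ := bdd_Ioo ha.continuousOn
  obtain ⟨Ca', hCa'0, hCa'⟩ := bdd_Ioo (ha.continuousOn_derivWithin huD le_rfl)
  obtain ⟨Cv, hCv0, hCv⟩ := bdd_Ioo hWcd.continuousOn
  obtain ⟨Cv', hCv'0, hCv'⟩ := bdd_Ioo (hWcd.continuousOn_derivWithin huD (by simp))
  have hCda : ∀ x ∈ Ioo (-1:ℝ) 1, |deriv a x| ≤ Ca' := fun x hx => by
    rw [← derivWithin_of_mem_nhds (hmem x hx)]; exact hCa' x (hsubI hx)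
  have hCV : ∀ x ∈ Ioo (-1:ℝ) 1, |deriv v x| ≤ Cv := fun x hx => by
    rw [hVW hx]; exact hCv x (hsubI hx)
  have hCV' : ∀ x ∈ Ioo (-1:ℝ) 1, |deriv (deriv v) x| ≤ Cv' := fun x hx => by
    rw [hV'eq x hx]; exact hCv' x (hsubI hx)
  obtain ⟨δ, hδ0, hδ⟩ : ∃ δ, 0 < δ ∧ ∀ x ∈ Icc (-1:ℝ) 1, δ ≤ v x := by
    obtain ⟨x₀, hx₀, hmin⟩ := isCompact_Icc.exists_isMinOn
      (⟨0, by norm_num⟩ : (Icc (-1:ℝ) 1).Nonempty) hv.continuousOn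
    exact ⟨v x₀, hvpos x₀ hx₀, fun x hx => hmin hx⟩
  have hcIoo : ContinuousOn a (Ioo (-1:ℝ) 1) := ha.continuousOn.mono hsubI
  have hcV : ContinuousOn (deriv v) (Ioo (-1:ℝ) 1) := (hWcd.continuousOn.mono hsubI).congr hVW
  have hcV' : ContinuousOn (deriv (deriv v)) (Ioo (-1:ℝ) 1) :=
    ((hWcd.continuousOn_derivWithin huD (by simp)).mono hsubI).congr (fun x hx => hV'eq x hx)
  have hcda : ContinuousOn (deriv a) (Ioo (-1:ℝ) 1) :=
    ((ha.continuousOn_derivWithin huD le_rfl).mono hsubI).congr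
      (fun x hx => (derivWithin_of_mem_nhds (hmem x hx)).symm)
  have hcv : ContinuousOn v (Ioo (-1:ℝ) 1) := hv.continuousOn.mono hsubI
  have hvne : ∀ x ∈ Ioo (-1:ℝ) 1, v x ≠ 0 := fun x hx => ne_of_gt (hvpos x (hsubI hx))
  have hbD : ∀ x ∈ Ioo (-1:ℝ) 1, HasDerivAt (fun y => a y * deriv v y)
      (deriv a x * deriv v x + a x * deriv (deriv v) x) x := fun x hx =>
    (hax x hx).mul (hV'x x hx)
  have hαs' : ∀ x ∈ Ioo (-1:ℝ) 1,
      αs x = -(deriv a x * deriv v x + a x * deriv (deriv v) x) / v x :=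
    fun x hx => by rw [hαs x hx, (hbD x hx).deriv]
  have hcαs : ContinuousOn αs (Ioo (-1:ℝ) 1) := by
    refine ContinuousOn.congr ?_ (fun x hx => hαs' x hx)
    exact (((hcda.mul hcV).add (hcIoo.mul hcV')).neg).div hcv hvne
  have hCαs : ∀ x ∈ Ioo (-1:ℝ) 1, |αs x| ≤ (Ca' * Cv + Ca * Cv') / δ := by
    intro x hx
    rw [hαs' x hx, abs_div, abs_neg, abs_of_pos (hvpos x (hsubI hx))]
    have h1 : |deriv a x * deriv v x + a x * deriv (deriv v) x| ≤ Ca' * Cv + Ca * Cv' := by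
      refine (abs_add_le _ _).trans ?_
      rw [abs_mul, abs_mul]
      exact add_le_add (mul_le_mul (hCda x hx) (hCV x hx) (abs_nonneg _) hCa'0.le)
        (mul_le_mul (hCa x (hsubI hx)) (hCV' x hx) (abs_nonneg _) hCa0.le)
    exact div_le_div₀ (by positivity) h1 hδ0 (hδ x (hsubI hx))
  -- MemLp facts
  have hmes_sa : AEStronglyMeasurable (fun x => Real.sqrt (a x))
      (volume.restrict (Ioo (-1:ℝ) 1)) :=
    ContinuousOn.aestronglyMeasurable
      (Real.continuous_sqrt.comp_continuousOn hcIoo) measurableSet_Ioo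
  have hsu : MemLp (fun x => Real.sqrt (a x) * u x) 2 (volume.restrict (Ioo (-1:ℝ) 1)) := by
    refine MemLp.of_le_mul (c := Real.sqrt Ca) huL2 (hmes_sa.mul huL2.1) ?_
    filter_upwards [ae_restrict_mem measurableSet_Ioo] with x hx
    simp only [Real.norm_eq_abs, abs_mul]
    have h1 : |Real.sqrt (a x)| ≤ Real.sqrt Ca := by
      rw [abs_of_nonneg (Real.sqrt_nonneg _)]
      exact Real.sqrt_le_sqrt ((le_abs_self _).trans (hCa x (hsubI hx)))
    exact mul_le_mul_of_nonneg_right h1 (abs_nonneg _)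
  have hz : MemLp (fun x => Real.sqrt (a x) * u x * (deriv v x / v x)) 2
      (volume.restrict (Ioo (-1:ℝ) 1)) := by
    refine MemLp.of_le_mul (c := Cv / δ) hsu
      (hsu.1.mul (ContinuousOn.aestronglyMeasurable (hcV.div hcv hvne) measurableSet_Ioo)) ?_
    filter_upwards [ae_restrict_mem measurableSet_Ioo] with x hx
    simp only [Real.norm_eq_abs, abs_mul]
    have h2 : |deriv v x / v x| ≤ Cv / δ := by
      rw [abs_div, abs_of_pos (hvpos x (hsubI hx))]
      exact div_le_div₀ hCv0.le (hCV x hx) hδ0 (hδ x (hsubI hx))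
    calc |Real.sqrt (a x)| * |u x| * |deriv v x / v x|
        ≤ |Real.sqrt (a x)| * |u x| * (Cv/δ) :=
          mul_le_mul_of_nonneg_left h2 (by positivity)
      _ = Cv / δ * (|Real.sqrt (a x)| * |u x|) := by ring
  have h_u2 : Integrable (fun x => u x ^ 2) (volume.restrict (Ioo (-1:ℝ) 1)) :=
    huL2.integrable_sq
  have h_au'2 : Integrable (fun x => a x * u' x ^ 2) (volume.restrict (Ioo (-1:ℝ) 1)) := by
    refine huL2'.integrable_sq.congr ?_
    filter_upwards [ae_restrict_mem measurableSet_Ioo] with x hx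
    rw [mul_pow, Real.sq_sqrt (hapos x hx).le]
  have h_G : Integrable (fun x => a x * (u' x - u x * (deriv v x / v x)) ^ 2)
      (volume.restrict (Ioo (-1:ℝ) 1)) := by
    have hwz : MemLp
        (fun x => Real.sqrt (a x) * u' x - Real.sqrt (a x) * u x * (deriv v x / v x)) 2
        (volume.restrict (Ioo (-1:ℝ) 1)) := huL2'.sub hz
    refine hwz.integrable_sq.congr ?_
    filter_upwards [ae_restrict_mem measurableSet_Ioo] with x hx
    have h1 : (Real.sqrt (a x)) ^ 2 = a x := Real.sq_sqrt (hapos x hx).le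
    calc (Real.sqrt (a x) * u' x - Real.sqrt (a x) * u x * (deriv v x / v x)) ^ 2
        = Real.sqrt (a x) ^ 2 * (u' x - u x * (deriv v x / v x)) ^ 2 := by ring
      _ = a x * (u' x - u x * (deriv v x / v x)) ^ 2 := by rw [h1]
  have h_αsu2 : Integrable (fun x => αs x * u x ^ 2) (volume.restrict (Ioo (-1:ℝ) 1)) := by
    refine Integrable.mono' (h_u2.const_mul ((Ca' * Cv + Ca * Cv') / δ))
      ((hcαs.aestronglyMeasurable measurableSet_Ioo).mul h_u2.1) ?_
    filter_upwards [ae_restrict_mem measurableSet_Ioo] with x hx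
    rw [Real.norm_eq_abs, abs_mul, abs_of_nonneg (sq_nonneg (u x))]
    exact mul_le_mul_of_nonneg_right (hCαs x hx) (sq_nonneg _)
  -- derivative of g = a u²
  have hgD : ∀ x ∈ Ioo (-1:ℝ) 1, HasDerivAt (fun y => a y * u y ^ 2)
      (deriv a x * u x ^ 2 + a x * (2 * u x * u' x)) x := by
    intro x hx
    refine ((hax x hx).mul ((hu x hx).pow 2)).congr_deriv ?_
    simp only [Pi.pow_apply]
    push_cast
    ring
  have hDint : Integrable (fun x => deriv a x * u x ^ 2 + a x * (2 * u x * u' x))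
      (volume.restrict (Ioo (-1:ℝ) 1)) := by
    have h1 : Integrable (fun x => deriv a x * u x ^ 2) (volume.restrict (Ioo (-1:ℝ) 1)) := by
      refine Integrable.mono' (h_u2.const_mul Ca')
        ((hcda.aestronglyMeasurable measurableSet_Ioo).mul h_u2.1) ?_
      filter_upwards [ae_restrict_mem measurableSet_Ioo] with x hx
      rw [Real.norm_eq_abs, abs_mul, abs_of_nonneg (sq_nonneg (u x))]
      exact mul_le_mul_of_nonneg_right (hCda x hx) (sq_nonneg _)
    have h2 : Integrable (fun x => (Real.sqrt (a x) * u' x) * (Real.sqrt (a x) * u x))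
        (volume.restrict (Ioo (-1:ℝ) 1)) := l2mul huL2' hsu
    refine h1.add ((h2.const_mul 2).congr ?_)
    filter_upwards [ae_restrict_mem measurableSet_Ioo] with x hx
    have h3 : Real.sqrt (a x) * Real.sqrt (a x) = a x := Real.mul_self_sqrt (hapos x hx).le
    calc 2 * ((Real.sqrt (a x) * u' x) * (Real.sqrt (a x) * u x))
        = (Real.sqrt (a x) * Real.sqrt (a x)) * (2 * u x * u' x) := by ring
      _ = a x * (2 * u x * u' x) := by rw [h3]
  -- limits of g at endpoints
  have hgR := g_tendsto_right a u u' _ ha.continuousOn ha2 hapos hu h_u2 huL2'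
    (fun x hx => hgD x ⟨by linarith [hx.1], hx.2⟩) hDint
  have hgL := g_tendsto_left a u u' _ ha.continuousOn ha1 hapos hu h_u2 huL2'
    (fun x hx => hgD x ⟨hx.1, by linarith [hx.2]⟩) hDint
  -- derivative of F
  have hFd : ∀ x ∈ Ioo (-1:ℝ) 1, HasDerivAt (fun y => a y * deriv v y * u y ^ 2 / v y)
      (a x * u' x ^ 2 - αs x * u x ^ 2
        - a x * (u' x - u x * (deriv v x / v x)) ^ 2) x := by
    intro x hx
    have hnum : HasDerivAt (fun y => a y * deriv v y * u y ^ 2)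
        ((deriv a x * deriv v x + a x * deriv (deriv v) x) * u x ^ 2
          + a x * deriv v x * (2 * u x * u' x)) x := by
      refine ((hbD x hx).mul ((hu x hx).pow 2)).congr_deriv ?_
      simp only [Pi.pow_apply]
      push_cast
      ring
    have hdiv := hnum.div (hvx x hx) (hvne x hx)
    refine hdiv.congr_deriv ?_
    rw [hαs' x hx]
    have hv0 := hvne x hx
    field_simp
    ring
  have hF'int : Integrable (fun x => a x * u' x ^ 2 - αs x * u x ^ 2
      - a x * (u' x - u x * (deriv v x / v x)) ^ 2)
      (volume.restrict (Ioo (-1:ℝ) 1)) := (h_au'2.sub h_αsu2).sub h_G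
  -- F tends to zero at both endpoints
  have hFbound : ∀ y ∈ Ioo (-1:ℝ) 1,
      |a y * deriv v y * u y ^ 2 / v y| ≤ (Cv/δ) * (a y * u y ^ 2) := by
    intro y hy
    have hay := hapos y hy
    have hvy := hvpos y (hsubI hy)
    rw [abs_div, abs_of_pos hvy, abs_mul, abs_mul, abs_of_pos hay,
      abs_of_nonneg (sq_nonneg (u y))]
    calc a y * |deriv v y| * u y ^ 2 / v y
        ≤ a y * Cv * u y ^ 2 / δ := by
          refine div_le_div₀ (by positivity) ?_ hδ0 (hδ y (hsubI hy))
          exact mul_le_mul_of_nonneg_right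
            (mul_le_mul_of_nonneg_left (hCV y hy) hay.le) (sq_nonneg (u y))
      _ = (Cv/δ) * (a y * u y ^ 2) := by ring
  have hFtendR : Tendsto (fun y => a y * deriv v y * u y ^ 2 / v y) (𝓝[<] (1:ℝ)) (𝓝 0) := by
    have hub : Tendsto (fun y => (Cv/δ) * (a y * u y ^ 2)) (𝓝[<] (1:ℝ))
        (𝓝 ((Cv/δ) * 0)) := hgR.const_mul _
    rw [mul_zero] at hub
    have hlb : Tendsto (fun y => -((Cv/δ) * (a y * u y ^ 2))) (𝓝[<] (1:ℝ)) (𝓝 0) := by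
      simpa using hub.neg
    refine tendsto_of_tendsto_of_tendsto_of_le_of_le' hlb hub ?_ ?_
    · filter_upwards [Ioo_mem_nhdsLT_of_mem (show (1:ℝ) ∈ Ioc (-1) 1 by norm_num)] with y hy
      exact (abs_le.1 (hFbound y hy)).1
    · filter_upwards [Ioo_mem_nhdsLT_of_mem (show (1:ℝ) ∈ Ioc (-1) 1 by norm_num)] with y hy
      exact (abs_le.1 (hFbound y hy)).2
  have hFtendL : Tendsto (fun y => a y * deriv v y * u y ^ 2 / v y) (𝓝[>] (-1:ℝ)) (𝓝 0) := by
    have hub : Tendsto (fun y => (Cv/δ) * (a y * u y ^ 2)) (𝓝[>] (-1:ℝ))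
        (𝓝 ((Cv/δ) * 0)) := hgL.const_mul _
    rw [mul_zero] at hub
    have hlb : Tendsto (fun y => -((Cv/δ) * (a y * u y ^ 2))) (𝓝[>] (-1:ℝ)) (𝓝 0) := by
      simpa using hub.neg
    refine tendsto_of_tendsto_of_tendsto_of_le_of_le' hlb hub ?_ ?_
    · filter_upwards [Ioo_mem_nhdsGT_of_mem (show (-1:ℝ) ∈ Ico (-1) 1 by norm_num)] with y hy
      exact (abs_le.1 (hFbound y hy)).1
    · filter_upwards [Ioo_mem_nhdsGT_of_mem (show (-1:ℝ) ∈ Ico (-1) 1 by norm_num)] with y hy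
      exact (abs_le.1 (hFbound y hy)).2
  -- FTC : the integral of F' over Ioo is zero
  have hR := auxR (f := fun y => a y * deriv v y * u y ^ 2 / v y)
    (f' := fun x => a x * u' x ^ 2 - αs x * u x ^ 2
      - a x * (u' x - u x * (deriv v x / v x)) ^ 2)
    (fun x hx => hFd x ⟨by linarith [hx.1], hx.2⟩)
    (IntegrableOn.mono_set hF'int (fun t ht => ⟨by linarith [ht.1], ht.2⟩))
  have hL := auxL (f := fun y => a y * deriv v y * u y ^ 2 / v y)
    (f' := fun x => a x * u' x ^ 2 - αs x * u x ^ 2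
      - a x * (u' x - u x * (deriv v x / v x)) ^ 2)
    (fun x hx => hFd x ⟨hx.1, by linarith [hx.2]⟩)
    (IntegrableOn.mono_set hF'int (fun t ht => ⟨ht.1, by linarith [ht.2]⟩))
  have hRval := tendsto_nhds_unique hR hFtendR
  have hLval := tendsto_nhds_unique hL hFtendL
  have hii1 : IntervalIntegrable (fun x => a x * u' x ^ 2 - αs x * u x ^ 2
      - a x * (u' x - u x * (deriv v x / v x)) ^ 2) volume (-1) 0 := by
    rw [intervalIntegrable_iff_integrableOn_Ioc_of_le (by norm_num)]
    exact IntegrableOn.mono_set hF'int (fun t ht => ⟨ht.1, lt_of_le_of_lt ht.2 one_pos⟩)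
  have hii2 : IntervalIntegrable (fun x => a x * u' x ^ 2 - αs x * u x ^ 2
      - a x * (u' x - u x * (deriv v x / v x)) ^ 2) volume 0 1 := by
    rw [intervalIntegrable_iff_integrableOn_Ioc_of_le (by norm_num)]
    exact (IntegrableOn.mono_set hF'int
      (fun t (ht : t ∈ Ioo (0:ℝ) 1) => ⟨by linarith [ht.1], ht.2⟩)).congr_set_ae Ioo_ae_eq_Ioc.symm
  have hsplit : ∫ x in Ioo (-1:ℝ) 1, (a x * u' x ^ 2 - αs x * u x ^ 2
      - a x * (u' x - u x * (deriv v x / v x)) ^ 2)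
      = (∫ t in (-1:ℝ)..0, (a t * u' t ^ 2 - αs t * u t ^ 2
          - a t * (u' t - u t * (deriv v t / v t)) ^ 2))
        + ∫ t in (0:ℝ)..1, (a t * u' t ^ 2 - αs t * u t ^ 2
          - a t * (u' t - u t * (deriv v t / v t)) ^ 2) := by
    rw [intervalIntegral.integral_add_adjacent_intervals hii1 hii2,
      intervalIntegral.integral_of_le (by norm_num : (-1:ℝ) ≤ 1),
      integral_Ioc_eq_integral_Ioo]
  have hzero : ∫ x in Ioo (-1:ℝ) 1, (a x * u' x ^ 2 - αs x * u x ^ 2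
      - a x * (u' x - u x * (deriv v x / v x)) ^ 2) = 0 := by
    rw [hsplit]; linarith [hRval, hLval]
  have hsplit2 : ∫ x in Ioo (-1:ℝ) 1, (a x * u' x ^ 2 - αs x * u x ^ 2
      - a x * (u' x - u x * (deriv v x / v x)) ^ 2)
      = (∫ x in Ioo (-1:ℝ) 1, a x * u' x ^ 2) - (∫ x in Ioo (-1:ℝ) 1, αs x * u x ^ 2)
        - ∫ x in Ioo (-1:ℝ) 1, a x * (u' x - u x * (deriv v x / v x)) ^ 2 := by
    have h_sub : Integrable (fun x => a x * u' x ^ 2 - αs x * u x ^ 2)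
        (volume.restrict (Ioo (-1:ℝ) 1)) := h_au'2.sub h_αsu2
    rw [integral_sub h_sub h_G, integral_sub h_au'2 h_αsu2]
  have hGnn : 0 ≤ ∫ x in Ioo (-1:ℝ) 1, a x * (u' x - u x * (deriv v x / v x)) ^ 2 := by
    refine integral_nonneg_of_ae ?_
    filter_upwards [ae_restrict_mem measurableSet_Ioo] with x hx
    exact mul_nonneg (hapos x hx).le (sq_nonneg _)
  rw [hsplit2] at hzero
  linarith [hGnn, hzero]
end

section
/- Let H be a Hilbert space, {ω_k} an orthonormal basis, 0 = λ₁ < λ₂ ≤ λ₃ ≤ ⋯ with λ_k → ∞. Let v₀, v_d ∈ H with ω₁ = v_d/‖v_d‖ and ⟨v₀, v_d⟩ > 0. For ε > 0 define T_ε > 0 by e^{−λ₂ T_ε} = ε ⟨v₀,v_d⟩/(‖v₀‖·‖v_d‖²) and β_ε = (1/T_ε) ln(‖v_d‖²/⟨v₀,v_d⟩). Then the vector v(T_ε) = Σ_k e^{(−λ_k+β_ε)T_ε}⟨v₀,ω_k⟩ω_k satisfies ‖v(T_ε) − v_d‖ ≤ ε. -/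
/-!
Because ω₀ is parallel to v_d, the choice of β_ε makes the ω₀-component of v(T_ε) equal to v_d
exactly, so v(T_ε) − v_d is the tail of the expansion. By Parseval, multiplying the coordinates in
a Hilbert basis by scalars of modulus at most C scales the norm by at most C, and on the tail
the multipliers e^{(−λ_k+β_ε)T_ε} are at most e^{(−λ₁+β_ε)T_ε} = ε/‖v₀‖.
-/

open MeasureTheory Real RealInnerProductSpace

namespace HilbertBasis

variable {ι 𝕜 E : Type*} [RCLike 𝕜] [NormedAddCommGroup E] [InnerProductSpace 𝕜 E]
  (b : HilbertBasis ι 𝕜 E) {c : ι → 𝕜} {C : ℝ}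

open scoped InnerProductSpace

theorem memℓp_mul_repr (hc : ∀ i, ‖c i‖ ≤ C) (v : E) :
    Memℓp (fun i => c i * b.repr v i) 2 :=
  ((lp.memℓp (b.repr v)).norm.const_mul C).mono fun i => by
    rw [norm_mul]
    exact mul_le_mul_of_nonneg_right (hc i) (norm_nonneg _)

theorem hasSum_smul_inner_smul (hc : ∀ i, ‖c i‖ ≤ C) (v : E) :
    HasSum (fun i => c i • ⟪b i, v⟫_𝕜 • b i) (b.repr.symm ⟨_, b.memℓp_mul_repr hc v⟩) := by
  simpa [smul_smul, b.repr_apply_apply] using b.hasSum_repr_symm ⟨_, b.memℓp_mul_repr hc v⟩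

theorem norm_tsum_smul_inner_smul_le (hC : 0 ≤ C) (hc : ∀ i, ‖c i‖ ≤ C) (v : E) :
    ‖∑' i, c i • ⟪b i, v⟫_𝕜 • b i‖ ≤ C * ‖v‖ := by
  rw [(b.hasSum_smul_inner_smul hc v).tsum_eq, LinearIsometryEquiv.norm_map, ← b.repr.norm_map v]
  calc _ ≤ ‖(C : 𝕜) • b.repr v‖ := lp.norm_mono two_ne_zero fun i => by
          simpa only [lp.coeFn_smul, Pi.smul_apply, norm_mul, norm_smul, RCLike.norm_ofReal,
            abs_of_nonneg hC] using mul_le_mul_of_nonneg_right (hc i) (norm_nonneg _)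
    _ = C * ‖b.repr v‖ := by rw [norm_smul, RCLike.norm_ofReal, abs_of_nonneg hC]

theorem norm_tsum_smul_inner_smul_sub_le [DecidableEq ι] (hC : 0 ≤ C) (i₀ : ι)
    (hc : ∀ i ≠ i₀, ‖c i‖ ≤ C) (v : E) :
    ‖(∑' i, c i • ⟪b i, v⟫_𝕜 • b i) - c i₀ • ⟪b i₀, v⟫_𝕜 • b i₀‖ ≤ C * ‖v‖ := by
  set c' := Function.update c i₀ 0
  have hc' : ∀ i, ‖c' i‖ ≤ C := fun i => by
    rcases eq_or_ne i i₀ with rfl | hi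
    · simpa [c'] using hC
    · simpa [c', hi] using hc i hi
  have hupdate : (fun i => c i • ⟪b i, v⟫_𝕜 • b i) =
      Function.update (fun i => c' i • ⟪b i, v⟫_𝕜 • b i) i₀ (c i₀ • ⟪b i₀, v⟫_𝕜 • b i₀) := by
    ext i
    rcases eq_or_ne i i₀ with rfl | hi <;> simp [c', *]
  have hsum := (b.hasSum_smul_inner_smul hc' v).update i₀ (c i₀ • ⟪b i₀, v⟫_𝕜 • b i₀)
  rw [← hupdate, (b.hasSum_smul_inner_smul hc' v).tsum_eq.symm] at hsum
  simpa [hsum.tsum_eq, c'] using b.norm_tsum_smul_inner_smul_le hC hc' v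

end HilbertBasis

theorem approximate_controllability_step_general
    {H : Type*} [NormedAddCommGroup H] [InnerProductSpace ℝ H]
    (ω : HilbertBasis ℕ ℝ H) (lam : ℕ → ℝ)
    (hlam0 : lam 0 = 0)
    (hmono : ∀ k : ℕ, 1 ≤ k → lam 1 ≤ lam k)
    (v₀ vd : H) (hvd : vd ≠ 0) (hv₀ : v₀ ≠ 0)
    (hω0 : (ω 0 : H) = ‖vd‖⁻¹ • vd)
    (hpos : 0 < ⟪v₀, vd⟫)
    (ε : ℝ)
    (Tε : ℝ) (hTpos : 0 < Tε)
    (hT : Real.exp (-lam 1 * Tε) = ε * ⟪v₀, vd⟫ / (‖v₀‖ * ‖vd‖ ^ 2))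
    (βε : ℝ) (hβ : βε = (1 / Tε) * Real.log (‖vd‖ ^ 2 / ⟪v₀, vd⟫)) :
    ‖(∑' k : ℕ, Real.exp ((-lam k + βε) * Tε) • (⟪v₀, ω k⟫ • ω k)) - vd‖ ≤ ε := by
  have hexpβ : exp (βε * Tε) = ‖vd‖ ^ 2 / ⟪v₀, vd⟫ := by
    rw [hβ, mul_right_comm, one_div_mul_cancel hTpos.ne', one_mul, exp_log (by positivity)]
  have hhead : exp ((-lam 0 + βε) * Tε) • ⟪ω 0, v₀⟫ • ω 0 = vd := by
    rw [hlam0, neg_zero, zero_add, hexpβ, real_inner_comm v₀, hω0, real_inner_smul_right, smul_smul,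
      smul_smul]
    convert one_smul ℝ vd using 2
    field_simp
  have htail : ∀ k ≠ 0, ‖exp ((-lam k + βε) * Tε)‖ ≤ exp ((-lam 1 + βε) * Tε) := fun k hk => by
    rw [Real.norm_of_nonneg (exp_nonneg _), exp_le_exp]
    gcongr
    exact hmono k (Nat.one_le_iff_ne_zero.mpr hk)
  have hgain : exp ((-lam 1 + βε) * Tε) * ‖v₀‖ = ε := by
    rw [add_mul, exp_add, hT, hexpβ]
    field_simp
  simp_rw [real_inner_comm _ v₀]
  calc _ = ‖(∑' k, exp ((-lam k + βε) * Tε) • ⟪ω k, v₀⟫ • ω k)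
          - exp ((-lam 0 + βε) * Tε) • ⟪ω 0, v₀⟫ • ω 0‖ := by rw [hhead]
    _ ≤ exp ((-lam 1 + βε) * Tε) * ‖v₀‖ :=
      ω.norm_tsum_smul_inner_smul_sub_le (exp_nonneg _) 0 htail v₀
    _ = ε := hgain

/-- Abstract approximate controllability step: with ω₀ = v_d/‖v_d‖, ⟨v₀,v_d⟩ > 0,
    T_ε defined by e^{−λ₁T_ε} = ε⟨v₀,v_d⟩/(‖v₀‖‖v_d‖²) and
    β_ε = (1/T_ε) ln(‖v_d‖²/⟨v₀,v_d⟩), the state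
    v(T_ε) = Σ_k e^{(−λ_k+β_ε)T_ε}⟨v₀,ω_k⟩ω_k satisfies ‖v(T_ε) − v_d‖ ≤ ε.
    (Indexing starts from 0, so λ₀ = 0 and λ₁ play the roles of λ₁, λ₂ of the paper.) -/
theorem approximate_controllability_step
    {H : Type*} [NormedAddCommGroup H] [InnerProductSpace ℝ H] [CompleteSpace H]
    (ω : HilbertBasis ℕ ℝ H) (lam : ℕ → ℝ)
    (hlam0 : lam 0 = 0) (hlam1pos : 0 < lam 1)
    (hmono : ∀ k : ℕ, 1 ≤ k → lam 1 ≤ lam k)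
    (v₀ vd : H) (hvd : vd ≠ 0) (hv₀ : v₀ ≠ 0)
    (hω0 : (ω 0 : H) = ‖vd‖⁻¹ • vd)
    (hpos : 0 < ⟪v₀, vd⟫)
    (ε : ℝ) (hε : 0 < ε)
    (hsmall : ε * ⟪v₀, vd⟫ / (‖v₀‖ * ‖vd‖ ^ 2) < 1)
    (Tε : ℝ) (hTpos : 0 < Tε)
    (hT : Real.exp (-lam 1 * Tε) = ε * ⟪v₀, vd⟫ / (‖v₀‖ * ‖vd‖ ^ 2))
    (βε : ℝ) (hβ : βε = (1 / Tε) * Real.log (‖vd‖ ^ 2 / ⟪v₀, vd⟫)) :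
    ‖(∑' k : ℕ, Real.exp ((-lam k + βε) * Tε) • (⟪v₀, ω k⟫ • ω k)) - vd‖ ≤ ε :=
  approximate_controllability_step_general ω lam hlam0 hmono v₀ vd hvd hv₀ hω0 hpos ε Tε hTpos hT βε
    hβ
end

section
/- Let a ∈ C¹([-1,1]) be positive on (-1,1), vanishing at ±1, with ∫₀^· ds/a ∈ L¹(-1,1). Define A₀ u = (a u_x)_x on D(A₀) = H²_a(-1,1) = {u ∈ H¹_a : a u_x ∈ H¹(-1,1), (a u_x)(±1) = 0}. Then A₀ is self-adjoint and dissipative on L²(-1,1): ⟨A₀ u, u⟩ = −∫_{-1}^1 a(x) u_x(x)² dx ≤ 0 for all u ∈ D(A₀), and ⟨A₀ u, w⟩ = ⟨u, A₀ w⟩ for all u, w ∈ D(A₀). -/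
/-!
Everything follows from the integration by parts `∫ (a u')' w = -∫ a u' w'`, whose only
difficulty is the boundary term `v w` with `v = a u'` at `c = ±1`, where `a` degenerates. Its
derivative is integrable, so `v w` has one-sided limits at `±1`; and a limit `L` of a function
`f` with `f x ^ 2 ≤ |x - c| * g x`, `g` integrable, must vanish, since otherwise `|x - c|⁻¹`
would be integrable near `c`. Since `a` is Lipschitz and vanishes at `c`, `v ^ 2 = a * (a u' ^ 2)`
has such a bound, so `v → 0`; Cauchy–Schwarz then gives `v x ^ 2 ≤ |x - c| * ‖(a u')'‖₂ ^ 2`,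
which bounds `(v w) ^ 2` in the same way with `g = w ^ 2`.
-/

open MeasureTheory Set Real Topology Filter Asymptotics
open scoped NNReal

theorem sq_setIntegral_le_measureReal_mul_setIntegral_sq {X : Type*} [MeasurableSpace X]
    {μ : Measure X} {s : Set X} (hs : μ s ≠ ⊤) {f : X → ℝ} (hf : MemLp f 2 (μ.restrict s)) :
    (∫ x in s, f x ∂μ) ^ 2 ≤ μ.real s * ∫ x in s, f x ^ 2 ∂μ := by
  rcases eq_or_ne (μ s) 0 with hs0 | hs0
  · simp [Measure.restrict_eq_zero.2 hs0]
  have : IsFiniteMeasure (μ.restrict s) := isFiniteMeasure_restrict.2 hs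
  have hm : 0 < μ.real s := ENNReal.toReal_pos hs0 hs
  have jensen := (even_two.convexOn_pow (𝕜 := ℝ)).map_set_average_le (continuousOn_pow 2)
    isClosed_univ hs0 hs (ae_of_all _ fun _ => mem_univ _) (hf.integrable one_le_two)
    hf.integrable_sq
  rw [setAverage_eq, setAverage_eq, smul_eq_mul, smul_eq_mul, mul_pow] at jensen
  have := mul_le_mul_of_nonneg_left jensen (sq_nonneg (μ.real s))
  field_simp at this
  linarith

theorem volume_real_uIoc (a b : ℝ) : volume.real (uIoc a b) = |b - a| := by
  rw [uIoc, volume_real_Ioc, max_sub_min_eq_abs', max_eq_left (abs_nonneg _), abs_sub_comm]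

section

variable {s : Set ℝ} {c : ℝ}

theorem not_integrableOn_of_sub_inv_isBigO [OrdConnected s] (hc : c ∈ closure s) (hcs : c ∉ s)
    {g : ℝ → ℝ} (hg : (fun x => (x - c)⁻¹) =O[𝓝[s] c] g) : ¬IntegrableOn g s := by
  have := mem_closure_iff_nhdsWithin_neBot.1 hc
  have : TendstoIxxClass Icc (𝓝[s] c) (𝓝[s] c) := tendstoIxxClass_inf
  have hderiv : ∀ᶠ x in 𝓝[s] c, HasDerivAt (fun x => log (x - c)) (x - c)⁻¹ x := by
    filter_upwards [self_mem_nhdsWithin] with x hx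
    simpa using ((hasDerivAt_id x).sub_const c).log (sub_ne_zero.2 (ne_of_mem_of_not_mem hx hcs))
  have hlog : Tendsto (fun x => ‖log (x - c)‖) (𝓝[s] c) atTop := by
    refine tendsto_abs_atBot_atTop.comp (tendsto_log_nhdsNE_zero.comp ?_)
    rw [← sub_self c]
    exact (((hasDerivAt_id c).sub_const c).tendsto_nhdsNE one_ne_zero).mono_left
      (nhdsWithin_mono _ fun x hx => ne_of_mem_of_not_mem hx hcs)
  exact not_integrableOn_of_tendsto_norm_atTop_of_deriv_isBigO_filter _ self_mem_nhdsWithin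
    (hderiv.mono fun x hx => hx.differentiableAt) hlog
    (hg.congr' (hderiv.mono fun x hx => hx.deriv.symm) EventuallyEq.rfl)

theorem eq_zero_of_tendsto_of_sq_le_abs_sub_mul [OrdConnected s] (hc : c ∈ closure s)
    (hcs : c ∉ s) {f g : ℝ → ℝ} {L : ℝ} (hf : Tendsto f (𝓝[s] c) (𝓝 L))
    (hg : IntegrableOn g s) (hfg : ∀ x ∈ s, f x ^ 2 ≤ |x - c| * g x) : L = 0 := by
  by_contra hL
  refine not_integrableOn_of_sub_inv_isBigO hc hcs (IsBigO.of_bound (2 / L ^ 2) ?_) hg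
  have hL2 : 0 < L ^ 2 := by positivity
  filter_upwards [self_mem_nhdsWithin,
    (hf.pow 2).eventually (eventually_gt_nhds (half_lt_self hL2))] with x hxs hfx
  have hxc : 0 < |x - c| := abs_pos.2 (sub_ne_zero.2 (ne_of_mem_of_not_mem hxs hcs))
  have hgx : L ^ 2 / 2 < |x - c| * |g x| :=
    hfx.trans_le ((hfg x hxs).trans (by gcongr; exact le_abs_self _))
  rw [norm_inv, norm_eq_abs, norm_eq_abs, inv_le_iff_one_le_mul₀ hxc]
  calc 1 = 2 / L ^ 2 * (L ^ 2 / 2) := by field_simp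
    _ ≤ 2 / L ^ 2 * (|x - c| * |g x|) := by gcongr
    _ = _ := by ring

end

section

variable {α β : ℝ} {F F' : ℝ → ℝ}

theorem eq_add_intervalIntegral_of_hasDerivAt (hF : ∀ x ∈ Ioo α β, HasDerivAt F (F' x) x)
    (hF' : IntegrableOn F' (Ioo α β)) {x₀ x : ℝ} (hx₀ : x₀ ∈ Ioo α β) (hx : x ∈ Ioo α β) :
    F x = F x₀ + ∫ t in x₀..x, F' t := by
  have hsub := ordConnected_Ioo.uIcc_subset hx₀ hx
  rw [intervalIntegral.integral_eq_sub_of_hasDerivAt (fun t ht => hF t (hsub ht))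
    ((hF'.mono_set hsub).intervalIntegrable)]
  ring

theorem tendsto_nhdsWithin_Ioo_of_hasDerivAt (hF : ∀ x ∈ Ioo α β, HasDerivAt F (F' x) x)
    (hF' : IntegrableOn F' (Ioo α β)) {x₀ c : ℝ} (hx₀ : x₀ ∈ Ioo α β) (hc : c ∈ Icc α β) :
    Tendsto F (𝓝[Ioo α β] c) (𝓝 (F x₀ + ∫ t in x₀..c, F' t)) := by
  have hαβ : α ≤ β := hx₀.1.le.trans hx₀.2.le
  have hprim := intervalIntegral.continuousOn_primitive_interval'
    ((intervalIntegrable_iff_integrableOn_Ioo_of_le hαβ).2 hF')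
    (uIcc_of_le hαβ ▸ Ioo_subset_Icc_self hx₀)
  rw [uIcc_of_le hαβ] at hprim
  refine (((continuousWithinAt_const.add (hprim c hc)).tendsto).mono_left
    (nhdsWithin_mono _ Ioo_subset_Icc_self)).congr' ?_
  filter_upwards [self_mem_nhdsWithin] with x hx
  exact (eq_add_intervalIntegral_of_hasDerivAt hF hF' hx₀ hx).symm

theorem sq_le_abs_sub_mul_integral_sq (hF : ∀ x ∈ Ioo α β, HasDerivAt F (F' x) x)
    (hF' : MemLp F' 2 (volume.restrict (Ioo α β))) {c x : ℝ} (hc : c ∈ Icc α β)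
    (hlim : Tendsto F (𝓝[Ioo α β] c) (𝓝 0)) (hx : x ∈ Ioo α β) :
    F x ^ 2 ≤ |x - c| * ∫ t in Ioo α β, F' t ^ 2 := by
  have : IsFiniteMeasure (volume.restrict (Ioo α β)) :=
    isFiniteMeasure_restrict.2 measure_Ioo_lt_top.ne
  have hαβ : α < β := hx.1.trans hx.2
  have : (𝓝[Ioo α β] c).NeBot := mem_closure_iff_nhdsWithin_neBot.1 (closure_Ioo hαβ.ne ▸ hc)
  have hFx : F x + ∫ t in x..c, F' t = 0 := tendsto_nhds_unique
    (tendsto_nhdsWithin_Ioo_of_hasDerivAt hF (hF'.integrable one_le_two) hx hc) hlim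
  have hsub : uIoc x c ≤ᵐ[volume] Ioo α β :=
    (uIoc_subset_uIcc.trans (ordConnected_Icc.uIcc_subset (Ioo_subset_Icc_self hx) hc)
      ).eventuallyLE.trans Ioo_ae_eq_Icc.symm.le
  calc F x ^ 2 = (∫ t in uIoc x c, F' t) ^ 2 := by
        rw [eq_neg_of_add_eq_zero_left hFx, neg_sq, ← sq_abs,
          intervalIntegral.abs_integral_eq_abs_integral_uIoc, sq_abs]
    _ ≤ volume.real (uIoc x c) * ∫ t in uIoc x c, F' t ^ 2 :=
        sq_setIntegral_le_measureReal_mul_setIntegral_sq measure_Ioc_lt_top.ne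
          (hF'.mono_measure (Measure.restrict_mono_ae hsub))
    _ ≤ |x - c| * ∫ t in Ioo α β, F' t ^ 2 := by
        rw [volume_real_uIoc, abs_sub_comm]
        exact mul_le_mul_of_nonneg_left (setIntegral_mono_set hF'.integrable_sq
          (ae_of_all _ fun t => sq_nonneg _) hsub) (abs_nonneg _)

theorem tendsto_nhdsWithin_Ioo_zero_of_sq_le_abs_sub_mul
    (hF : ∀ x ∈ Ioo α β, HasDerivAt F (F' x) x) (hF' : IntegrableOn F' (Ioo α β)) {c : ℝ}
    (hc : c ∈ Icc α β) (hcs : c ∉ Ioo α β) {g : ℝ → ℝ} (hg : IntegrableOn g (Ioo α β))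
    (hFg : ∀ x ∈ Ioo α β, F x ^ 2 ≤ |x - c| * g x) : Tendsto F (𝓝[Ioo α β] c) (𝓝 0) := by
  rcases lt_or_ge α β with hαβ | hβα
  · have hlim := tendsto_nhdsWithin_Ioo_of_hasDerivAt hF hF'
      (x₀ := (α + β) / 2) ⟨by linarith, by linarith⟩ hc
    rwa [eq_zero_of_tendsto_of_sq_le_abs_sub_mul (closure_Ioo hαβ.ne ▸ hc) hcs hlim hg hFg]
      at hlim
  · simp [Ioo_eq_empty hβα.not_gt]

theorem setIntegral_Ioo_eq_zero_of_hasDerivAt_of_tendsto (hαβ : α < β)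
    (hF : ∀ x ∈ Ioo α β, HasDerivAt F (F' x) x) (hF' : IntegrableOn F' (Ioo α β))
    (hα : Tendsto F (𝓝[Ioo α β] α) (𝓝 0)) (hβ : Tendsto F (𝓝[Ioo α β] β) (𝓝 0)) :
    ∫ x in Ioo α β, F' x = 0 := by
  rw [nhdsWithin_Ioo_eq_nhdsGT hαβ] at hα
  rw [nhdsWithin_Ioo_eq_nhdsLT hαβ] at hβ
  rw [← integral_Ioc_eq_integral_Ioo, ← intervalIntegral.integral_of_le hαβ.le,
    intervalIntegral.integral_eq_sub_of_hasDerivAt_of_tendsto hαβ hF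
      ((intervalIntegrable_iff_integrableOn_Ioo_of_le hαβ.le).2 hF') hα hβ, sub_zero]

end

section

variable {α β : ℝ} {a u' Au w w' : ℝ → ℝ} {K : ℝ≥0}

theorem tendsto_mul_nhdsWithin_Ioo_zero_of_lipschitzOnWith (ha : LipschitzOnWith K a (Icc α β))
    (ha0 : ∀ x ∈ Ioo α β, 0 ≤ a x) {c : ℝ} (hc : c ∈ Icc α β) (hcs : c ∉ Ioo α β) (hac : a c = 0)
    (hv : ∀ x ∈ Ioo α β, HasDerivAt (fun y => a y * u' y) (Au x) x)
    (hAu : IntegrableOn Au (Ioo α β))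
    (hu' : MemLp (fun x => √(a x) * u' x) 2 (volume.restrict (Ioo α β))) :
    Tendsto (fun x => a x * u' x) (𝓝[Ioo α β] c) (𝓝 0) := by
  refine tendsto_nhdsWithin_Ioo_zero_of_sq_le_abs_sub_mul hv hAu hc hcs
    (hu'.integrable_sq.const_mul K) fun x hx => ?_
  have hax : |a x| ≤ K * |x - c| := by
    simpa [Real.dist_eq, hac] using ha.dist_le_mul x (Ioo_subset_Icc_self hx) c hc
  calc (a x * u' x) ^ 2 = a x * (√(a x) * u' x) ^ 2 := by
        rw [mul_pow (√(a x)), sq_sqrt (ha0 x hx)]; ring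
    _ ≤ K * |x - c| * (√(a x) * u' x) ^ 2 := by gcongr; exact (le_abs_self _).trans hax
    _ = |x - c| * (K * (√(a x) * u' x) ^ 2) := by ring

theorem setIntegral_deriv_weighted_mul_eq_neg (hαβ : α < β)
    (ha : LipschitzOnWith K a (Icc α β)) (ha0 : ∀ x ∈ Ioo α β, 0 ≤ a x)
    (haα : a α = 0) (haβ : a β = 0)
    (hv : ∀ x ∈ Ioo α β, HasDerivAt (fun y => a y * u' y) (Au x) x)
    (hAu : MemLp Au 2 (volume.restrict (Ioo α β)))
    (hu' : MemLp (fun x => √(a x) * u' x) 2 (volume.restrict (Ioo α β)))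
    (hw : ∀ x ∈ Ioo α β, HasDerivAt w (w' x) x) (hw2 : MemLp w 2 (volume.restrict (Ioo α β)))
    (hw' : MemLp (fun x => √(a x) * w' x) 2 (volume.restrict (Ioo α β))) :
    ∫ x in Ioo α β, Au x * w x = -∫ x in Ioo α β, a x * u' x * w' x := by
  have : IsFiniteMeasure (volume.restrict (Ioo α β)) :=
    isFiniteMeasure_restrict.2 measure_Ioo_lt_top.ne
  have hAuw : IntegrableOn (fun x => Au x * w x) (Ioo α β) := hAu.integrable_mul hw2
  have hauw : IntegrableOn (fun x => a x * u' x * w' x) (Ioo α β) := by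
    refine IntegrableOn.congr_fun (hu'.integrable_mul hw') (fun x hx => ?_) measurableSet_Ioo
    simp only [Pi.mul_apply]
    rw [mul_mul_mul_comm, mul_self_sqrt (ha0 x hx), mul_assoc]
  have hvw : ∀ x ∈ Ioo α β, HasDerivAt (fun y => a y * u' y * w y)
      (Au x * w x + a x * u' x * w' x) x := fun x hx => (hv x hx).mul (hw x hx)
  have hvw0 : ∀ c ∈ Icc α β, c ∉ Ioo α β → a c = 0 →
      Tendsto (fun x => a x * u' x * w x) (𝓝[Ioo α β] c) (𝓝 0) := by
    intro c hc hcs hac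
    have hv0 := tendsto_mul_nhdsWithin_Ioo_zero_of_lipschitzOnWith ha ha0 hc hcs hac hv
      (hAu.integrable one_le_two) hu'
    refine tendsto_nhdsWithin_Ioo_zero_of_sq_le_abs_sub_mul hvw (hAuw.add hauw) hc hcs
      (hw2.integrable_sq.const_mul (∫ t in Ioo α β, Au t ^ 2)) fun x hx => ?_
    calc (a x * u' x * w x) ^ 2 = (a x * u' x) ^ 2 * w x ^ 2 := by ring
      _ ≤ |x - c| * (∫ t in Ioo α β, Au t ^ 2) * w x ^ 2 := by
          gcongr; exact sq_le_abs_sub_mul_integral_sq hv hAu hc hv0 hx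
      _ = _ := by ring
  have hIBP := setIntegral_Ioo_eq_zero_of_hasDerivAt_of_tendsto hαβ hvw (hAuw.add hauw)
    (hvw0 α (left_mem_Icc.2 hαβ.le) (fun h => lt_irrefl _ h.1) haα)
    (hvw0 β (right_mem_Icc.2 hαβ.le) (fun h => lt_irrefl _ h.2) haβ)
  rw [integral_add hAuw hauw] at hIBP
  linarith

end

theorem degenerate_operator_selfadjoint_dissipative_general
    (a : ℝ → ℝ) (ha : ContDiffOn ℝ 1 a (Icc (-1) 1))
    (hapos : ∀ x ∈ Ioo (-1:ℝ) 1, 0 < a x)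
    (ha1 : a (-1) = 0) (ha2 : a 1 = 0)
    (u u' Au w w' Aw : ℝ → ℝ)
    -- u ∈ D(A₀)
    (hu : ∀ x ∈ Ioo (-1:ℝ) 1, HasDerivAt u (u' x) x)
    (huL2 : MemLp u 2 (volume.restrict (Ioo (-1) 1)))
    (huL2' : MemLp (fun x => Real.sqrt (a x) * u' x) 2 (volume.restrict (Ioo (-1) 1)))
    (hAu : ∀ x ∈ Ioo (-1:ℝ) 1, HasDerivAt (fun y => a y * u' y) (Au x) x)
    (hAuL2 : MemLp Au 2 (volume.restrict (Ioo (-1) 1)))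
    -- w ∈ D(A₀)
    (hw : ∀ x ∈ Ioo (-1:ℝ) 1, HasDerivAt w (w' x) x)
    (hwL2 : MemLp w 2 (volume.restrict (Ioo (-1) 1)))
    (hwL2' : MemLp (fun x => Real.sqrt (a x) * w' x) 2 (volume.restrict (Ioo (-1) 1)))
    (hAw : ∀ x ∈ Ioo (-1:ℝ) 1, HasDerivAt (fun y => a y * w' y) (Aw x) x)
    (hAwL2 : MemLp Aw 2 (volume.restrict (Ioo (-1) 1))) :
    (∫ x in Ioo (-1:ℝ) 1, Au x * u x) = -(∫ x in Ioo (-1:ℝ) 1, a x * u' x ^ 2) ∧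
    (∫ x in Ioo (-1:ℝ) 1, Au x * u x) ≤ 0 ∧
    (∫ x in Ioo (-1:ℝ) 1, Au x * w x) = ∫ x in Ioo (-1:ℝ) 1, u x * Aw x := by
  obtain ⟨K, hK⟩ := ha.exists_lipschitzOnWith one_ne_zero (convex_Icc _ _) isCompact_Icc
  have ha0 : ∀ x ∈ Ioo (-1:ℝ) 1, 0 ≤ a x := fun x hx => (hapos x hx).le
  have hαβ : (-1:ℝ) < 1 := by norm_num
  have huu := setIntegral_deriv_weighted_mul_eq_neg hαβ hK ha0 ha1 ha2 hAu hAuL2 huL2' hu huL2 huL2'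
  have huw := setIntegral_deriv_weighted_mul_eq_neg hαβ hK ha0 ha1 ha2 hAu hAuL2 huL2' hw hwL2 hwL2'
  have hwu := setIntegral_deriv_weighted_mul_eq_neg hαβ hK ha0 ha1 ha2 hAw hAwL2 hwL2' hu huL2 huL2'
  simp_rw [mul_assoc, ← sq] at huu
  refine ⟨huu, huu ▸ neg_nonpos.2 (setIntegral_nonneg measurableSet_Ioo fun x hx =>
    mul_nonneg (ha0 x hx) (sq_nonneg _)), ?_⟩
  simp_rw [huw, mul_comm (u _) (Aw _), hwu, mul_right_comm (a _) (w' _)]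

/-- The degenerate diffusion operator A₀u = (a u_x)_x on
    D(A₀) = {u ∈ H¹_a : a u_x ∈ H¹(-1,1), (a u_x)(±1) = 0} is symmetric and dissipative:
    ⟨A₀u,u⟩ = −∫ a u_x² ≤ 0 and ⟨A₀u,w⟩ = ⟨u,A₀w⟩. -/
theorem degenerate_operator_selfadjoint_dissipative
    (a : ℝ → ℝ) (ha : ContDiffOn ℝ 1 a (Icc (-1) 1))
    (hapos : ∀ x ∈ Ioo (-1:ℝ) 1, 0 < a x)
    (ha1 : a (-1) = 0) (ha2 : a 1 = 0)
    (hAint : IntegrableOn (fun x => ∫ s in (0:ℝ)..x, 1 / a s) (Ioo (-1) 1))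
    (u u' Au w w' Aw : ℝ → ℝ)
    -- u ∈ D(A₀)
    (hu : ∀ x ∈ Ioo (-1:ℝ) 1, HasDerivAt u (u' x) x)
    (huL2 : MemLp u 2 (volume.restrict (Ioo (-1) 1)))
    (huL2' : MemLp (fun x => Real.sqrt (a x) * u' x) 2 (volume.restrict (Ioo (-1) 1)))
    (hAu : ∀ x ∈ Ioo (-1:ℝ) 1, HasDerivAt (fun y => a y * u' y) (Au x) x)
    (hAuL2 : MemLp Au 2 (volume.restrict (Ioo (-1) 1)))
    (hubc : a 1 * u' 1 = 0 ∧ a (-1) * u' (-1) = 0)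
    -- w ∈ D(A₀)
    (hw : ∀ x ∈ Ioo (-1:ℝ) 1, HasDerivAt w (w' x) x)
    (hwL2 : MemLp w 2 (volume.restrict (Ioo (-1) 1)))
    (hwL2' : MemLp (fun x => Real.sqrt (a x) * w' x) 2 (volume.restrict (Ioo (-1) 1)))
    (hAw : ∀ x ∈ Ioo (-1:ℝ) 1, HasDerivAt (fun y => a y * w' y) (Aw x) x)
    (hAwL2 : MemLp Aw 2 (volume.restrict (Ioo (-1) 1)))
    (hwbc : a 1 * w' 1 = 0 ∧ a (-1) * w' (-1) = 0) :
    (∫ x in Ioo (-1:ℝ) 1, Au x * u x) = -(∫ x in Ioo (-1:ℝ) 1, a x * u' x ^ 2) ∧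
    (∫ x in Ioo (-1:ℝ) 1, Au x * u x) ≤ 0 ∧
    (∫ x in Ioo (-1:ℝ) 1, Au x * w x) = ∫ x in Ioo (-1:ℝ) 1, u x * Aw x :=
  degenerate_operator_selfadjoint_dissipative_general a ha hapos ha1 ha2 u u' Au w w' Aw hu huL2
    huL2' hAu hAuL2 hw hwL2 hwL2' hAw hAwL2
end
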